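/- arXiv:0808.2944 — 6 statements merged into one kernel-verified Lean document; each statement's English description precedes it below -/
import Mathlib

section
/- Let G be a countable group, π a unitary representation of G on a complex Hilbert space H, and N ∈ ℕ. Suppose ξ₁,…,ξ_N are Parseval frame vectors for H, ξ_{N+1} is a Parseval frame vector for the closed subspace M := closure(span{π(g)ξ_{N+1} : g ∈ G}), the tuple ξ₁,…,ξ_{N+1} is strongly disjoint, and ∑_{i=1}^{N+1} ‖ξᵢ‖² = 1. Then there is no nonzero vector ξ_{N+2} in any complex Hilbert space K carrying a unitary representation σ of G such that ξ_{N+2} is a Parseval frame vector for the closed span of its orbit {σ(g)ξ_{N+2} : g ∈ G} and ξ_{N+2} is strongly disjoint from each ξᵢ, i = 1,…,N+1. -/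
noncomputable section

open scoped ComplexConjugate

local notation "⟪" x ", " y "⟫" => @inner ℂ _ _ x y

/-- A group is ICC if every nontrivial conjugacy class is infinite. -/
def IsICC (G : Type*) [Group G] : Prop :=
  ∀ g : G, g ≠ 1 → {x : G | ∃ h : G, x = h * g * h⁻¹}.Infinite

variable {G : Type*} [Group G]
variable {H : Type*} [NormedAddCommGroup H] [InnerProductSpace ℂ H]

/-- `ξ` is a Parseval frame vector for the whole space `H`. -/
def IsParsevalFrameVector (π : G →* (H ≃ₗᵢ[ℂ] H)) (ξ : H) : Prop :=
  ∀ f : H, ∑' g : G, ‖⟪f, π g ξ⟫‖ ^ 2 = ‖f‖ ^ 2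

/-- `ξ` is a Parseval frame vector for the (closed) subspace `M` of `H`. -/
def IsParsevalFrameVectorIn (π : G →* (H ≃ₗᵢ[ℂ] H)) (ξ : H) (M : Submodule ℂ H) : Prop :=
  (∀ g : G, π g ξ ∈ M) ∧ ∀ f ∈ M, ∑' g : G, ‖⟪f, π g ξ⟫‖ ^ 2 = ‖f‖ ^ 2

/-- The closed linear span of the orbit `{π(g)ξ : g ∈ G}`. -/
def orbitSpan (π : G →* (H ≃ₗᵢ[ℂ] H)) (ξ : H) : Submodule ℂ H :=
  (Submodule.span ℂ (Set.range fun g : G => π g ξ)).topologicalClosure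

/-- `ξ₁, …, ξ_k` (with `ξ i` a Parseval frame vector for `M i`) form a strongly disjoint
`k`-tuple: `{π(g)ξ₁ ⊕ ⋯ ⊕ π(g)ξ_k : g ∈ G}` is a Parseval frame for `M₁ ⊕ ⋯ ⊕ M_k`. -/
def StronglyDisjointTuple {k : ℕ} (π : G →* (H ≃ₗᵢ[ℂ] H)) (ξ : Fin k → H)
    (M : Fin k → Submodule ℂ H) : Prop :=
  ∀ f : Fin k → H, (∀ i, f i ∈ M i) →
    ∑' g : G, ‖∑ i, ⟪f i, π g (ξ i)⟫‖ ^ 2 = ∑ i, ‖f i‖ ^ 2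

/-- `T` belongs to the commutant `π(G)'`. -/
def InCommutant (π : G →* (H ≃ₗᵢ[ℂ] H)) (T : H →L[ℂ] H) : Prop :=
  ∀ (g : G) (x : H), T (π g x) = π g (T x)

/-- The closed subspace `closure {T ξ : T ∈ π(G)'}`. -/
def commOrbit (π : G →* (H ≃ₗᵢ[ℂ] H)) (ξ : H) : Submodule ℂ H :=
  (Submodule.span ℂ {x : H | ∃ T : H →L[ℂ] H, InCommutant π T ∧ x = T ξ}).topologicalClosure

/-- `p` is the orthogonal projection of `H` onto the subspace `M`. -/
def IsOrthoProjOnto (M : Submodule ℂ H) (p : H →L[ℂ] H) : Prop :=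
  ∀ x : H, p x ∈ M ∧ x - p x ∈ Mᗮ

/-- `ζ` is a Bessel vector for the representation `π`. -/
def IsBesselVector (π : G →* (H ≃ₗᵢ[ℂ] H)) (ζ : H) : Prop :=
  ∃ B : ℝ, 0 < B ∧ ∀ f : H, ∀ s : Finset G, ∑ g ∈ s, ‖⟪f, π g ζ⟫‖ ^ 2 ≤ B * ‖f‖ ^ 2

/-- Strong disjointness of a Parseval frame vector `ξ` (for the subspace `M` of `H`, under `π`)
and `ζ` (for the subspace `M₂` of `H₂`, under `σ`), expressed by the vanishing of the mixed
sums `∑_g ⟨v, π(g)ξ⟩ conj ⟨w, σ(g)ζ⟩`. -/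
def StronglyDisjointPairIn (π : G →* (H ≃ₗᵢ[ℂ] H)) {H₂ : Type*} [NormedAddCommGroup H₂]
    [InnerProductSpace ℂ H₂] (σ : G →* (H₂ ≃ₗᵢ[ℂ] H₂)) (ξ : H) (ζ : H₂)
    (M : Submodule ℂ H) (M₂ : Submodule ℂ H₂) : Prop :=
  ∀ v ∈ M, ∀ w ∈ M₂, ∑' g : G, ⟪v, π g ξ⟫ * (starRingEnd ℂ) ⟪w, σ g ζ⟫ = 0

/-- A Riesz sequence: two-sided ℓ²-bounds on finite linear combinations. -/
def IsRieszSequence {J : Type*} (f : J → H) : Prop :=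
  ∃ A B : ℝ, 0 < A ∧ 0 < B ∧ ∀ c : J →₀ ℂ,
    A * ∑ j ∈ c.support, ‖c j‖ ^ 2 ≤ ‖∑ j ∈ c.support, c j • f j‖ ^ 2 ∧
    ‖∑ j ∈ c.support, c j • f j‖ ^ 2 ≤ B * ∑ j ∈ c.support, ‖c j‖ ^ 2

/-!
Put `c g = ∑ᵢ ⟪ξᵢ, π(g)ξᵢ⟫`. Strong disjointness of the tuple, tested on `(ξ₁, …, ξ_{N+1})`,
gives `∑_g |c g|² = ∑ᵢ ‖ξᵢ‖² = 1`, while `c 1 = ∑ᵢ ‖ξᵢ‖² = 1`; hence `c` is the indicator of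
the identity. Summing the disjointness relations of `ζ` with each `ξᵢ` (tested on `ξᵢ` and `ζ`)
then gives `0 = ∑_g c g · conj ⟪ζ, σ(g)ζ⟫ = ‖ζ‖²`; exchanging `∑_g` and `∑ᵢ` is legitimate
because every factor is square-summable by a Parseval identity.
-/

theorem mem_orbitSpan_self (π : G →* (H ≃ₗᵢ[ℂ] H)) (ξ : H) : ξ ∈ orbitSpan π ξ :=
  Submodule.le_topologicalClosure _ (Submodule.subset_span ⟨1, by simp⟩)

theorem summable_norm_inner_sq_of_tsum_eq {ι : Type*} {v : ι → H} {f : H}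
    (h : ∑' k, ‖⟪f, v k⟫‖ ^ 2 = ‖f‖ ^ 2) : Summable fun k => ‖⟪f, v k⟫‖ ^ 2 := by
  by_cases hf : f = 0
  · simp [hf]
  · by_contra hns
    rw [tsum_eq_zero_of_not_summable hns] at h
    exact hf (by simpa using h.symm)

theorem StronglyDisjointTuple.tsum_norm_inner_sq {k : ℕ} {π : G →* (H ≃ₗᵢ[ℂ] H)}
    {ξ : Fin k → H} {M : Fin k → Submodule ℂ H} (h : StronglyDisjointTuple π ξ M) (i : Fin k)
    {f : H} (hf : f ∈ M i) : ∑' g, ‖⟪f, π g (ξ i)⟫‖ ^ 2 = ‖f‖ ^ 2 := by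
  have hmem : ∀ j, (Pi.single i f : Fin k → H) j ∈ M j := by
    intro j
    rcases eq_or_ne j i with rfl | hj
    · simpa using hf
    · simp [hj]
  have hsum : ∀ g, ∑ j, ⟪(Pi.single i f : Fin k → H) j, π g (ξ j)⟫ = ⟪f, π g (ξ i)⟫ := fun g =>
    (Finset.sum_eq_single i (fun j _ hj => by simp [hj]) (by simp)).trans (by simp)
  have hparseval := h (Pi.single i f) hmem
  simp only [hsum] at hparseval
  rwa [Finset.sum_eq_single i (fun j _ hj => by simp [hj]) (by simp), Pi.single_eq_same]
    at hparseval

theorem summable_mul_conj_of_summable_norm_sq {ι : Type*} {a b : ι → ℂ}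
    (ha : Summable fun k => ‖a k‖ ^ 2) (hb : Summable fun k => ‖b k‖ ^ 2) :
    Summable fun k => a k * conj (b k) := by
  refine Summable.of_norm_bounded ((ha.add hb).div_const 2) fun k => ?_
  rw [norm_mul, RCLike.norm_conj]
  nlinarith [sq_nonneg (‖a k‖ - ‖b k‖)]

theorem eq_zero_of_tsum_norm_sq_eq {ι E : Type*} [NormedAddCommGroup E] {c : ι → E} {i : ι}
    (hi : c i ≠ 0) (h : ∑' k, ‖c k‖ ^ 2 = ‖c i‖ ^ 2) {j : ι} (hji : j ≠ i) : c j = 0 := by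
  classical
  have hs : Summable fun k => ‖c k‖ ^ 2 := by
    by_contra hns
    rw [tsum_eq_zero_of_not_summable hns] at h
    exact hi (by simpa using h.symm)
  have hpair := hs.sum_le_tsum {j, i} (fun k _ => by positivity)
  rw [Finset.sum_pair hji, h] at hpair
  exact norm_eq_zero.mp (by nlinarith [norm_nonneg (c j)])

theorem stmt1_general {G : Type*} [Group G]
    {H : Type*} [NormedAddCommGroup H] [InnerProductSpace ℂ H]
    (π : G →* (H ≃ₗᵢ[ℂ] H)) (N : ℕ) (ξ : Fin (N + 1) → H)
    (hdisj : StronglyDisjointTuple π ξ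
      (fun i => if i = Fin.last N then orbitSpan π (ξ (Fin.last N)) else ⊤))
    (hnorm : ∑ i, ‖ξ i‖ ^ 2 = 1)
    (K : Type*) [NormedAddCommGroup K] [InnerProductSpace ℂ K]
    (σ : G →* (K ≃ₗᵢ[ℂ] K)) (ζ : K) (hζ0 : ζ ≠ 0)
    (hζP : IsParsevalFrameVectorIn σ ζ (orbitSpan σ ζ)) :
    ¬ (∀ i : Fin (N + 1), StronglyDisjointPairIn π σ (ξ i) ζ
        (if i = Fin.last N then orbitSpan π (ξ (Fin.last N)) else (⊤ : Submodule ℂ H))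
        (orbitSpan σ ζ)) := by
  intro hsd
  have hξM : ∀ i, ξ i ∈ if i = Fin.last N then orbitSpan π (ξ (Fin.last N)) else ⊤ := by
    intro i
    split_ifs with hi
    · exact hi ▸ mem_orbitSpan_self π (ξ i)
    · exact Submodule.mem_top
  have hζM := mem_orbitSpan_self σ ζ
  set c : G → ℂ := fun g => ∑ i, ⟪ξ i, π g (ξ i)⟫ with hc
  have hc_one : c 1 = 1 := by
    simp only [hc, map_one, LinearIsometryEquiv.coe_one, id, inner_self_eq_norm_sq_to_K,
      RCLike.ofReal_eq_complex_ofReal]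
    exact_mod_cast hnorm
  have hc_ne_one : ∀ g ≠ 1, c g = 0 := fun g hg =>
    eq_zero_of_tsum_norm_sq_eq (by simp [hc_one]) (by simpa [hnorm, hc_one] using hdisj ξ hξM) hg
  have hsum_zero : ∑' g, c g * conj ⟪ζ, σ g ζ⟫ = 0 := by
    simp only [hc, Finset.sum_mul]
    rw [Summable.tsum_finsetSum fun i _ => summable_mul_conj_of_summable_norm_sq
      (summable_norm_inner_sq_of_tsum_eq (hdisj.tsum_norm_inner_sq i (hξM i)))
      (summable_norm_inner_sq_of_tsum_eq (hζP.2 ζ hζM))]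
    exact Finset.sum_eq_zero fun i _ => hsd i (ξ i) (hξM i) ζ hζM
  rw [tsum_eq_single 1 fun g hg => by simp [hc_ne_one g hg], hc_one] at hsum_zero
  exact hζ0 (by simpa [inner_self_eq_norm_sq_to_K] using hsum_zero)

theorem stmt1 {G : Type*} [Group G] [Countable G]
    {H : Type*} [NormedAddCommGroup H] [InnerProductSpace ℂ H] [CompleteSpace H]
    (π : G →* (H ≃ₗᵢ[ℂ] H)) (N : ℕ) (ξ : Fin (N + 1) → H)
    (hP : ∀ i : Fin (N + 1), i ≠ Fin.last N → IsParsevalFrameVector π (ξ i))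
    (hlast : IsParsevalFrameVectorIn π (ξ (Fin.last N)) (orbitSpan π (ξ (Fin.last N))))
    (hdisj : StronglyDisjointTuple π ξ
      (fun i => if i = Fin.last N then orbitSpan π (ξ (Fin.last N)) else ⊤))
    (hnorm : ∑ i, ‖ξ i‖ ^ 2 = 1)
    (K : Type*) [NormedAddCommGroup K] [InnerProductSpace ℂ K] [CompleteSpace K]
    (σ : G →* (K ≃ₗᵢ[ℂ] K)) (ζ : K) (hζ0 : ζ ≠ 0)
    (hζP : IsParsevalFrameVectorIn σ ζ (orbitSpan σ ζ)) :
    ¬ (∀ i : Fin (N + 1), StronglyDisjointPairIn π σ (ξ i) ζ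
        (if i = Fin.last N then orbitSpan π (ξ (Fin.last N)) else (⊤ : Submodule ℂ H))
        (orbitSpan σ ζ)) :=
  stmt1_general π N ξ hdisj hnorm K σ ζ hζ0 hζP
end
end

section
/- Let G be a countable ICC group and π a unitary representation of G on a complex Hilbert space H. Assume ξ₁,…,ξ_N are Parseval frame vectors for H, ξ_{N+1} is a Parseval frame vector for M := closure(span{π(g)ξ_{N+1} : g ∈ G}) with p_r' the orthogonal projection of H onto M, the (N+1)-tuple ξ₁,…,ξ_{N+1} is strongly disjoint, and ∑_{i=1}^{N+1} ‖ξᵢ‖² = 1. Let η ∈ H be a Parseval frame vector for a closed subspace of H, and let q' ∈ π(G)' be the orthogonal projection onto that subspace. Then there exist unique operators u₁',…,u_{N+1}' ∈ π(G)' with q'uᵢ' = uᵢ' for all i and u_{N+1}'p_r' = u_{N+1}', such that η = u₁'ξ₁ + ⋯ + u_{N+1}'ξ_{N+1}; moreover ∑_{i=1}^{N+1} uᵢ'(uᵢ')* = q'. -/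
noncomputable section

open scoped ComplexConjugate

local notation "⟪" x ", " y "⟫" => @inner ℂ _ _ x y

variable {G : Type*} [Group G]
variable {H : Type*} [NormedAddCommGroup H] [InnerProductSpace ℂ H]

/-!
Write `Θᵢ : H → ℓ²(G)` for the analysis operator `f ↦ (⟪π(g)ξᵢ, f⟫)_g` of `ξᵢ`, and `Θ` for that
of `η`. Strong disjointness and `∑ ‖ξᵢ‖² = 1` give `∑ᵢ ⟪ξᵢ, π(g)ξᵢ⟫ = δ_{g,1}`, so `∑ᵢ Θᵢ Θᵢ*`
fixes every `δ_g` and is the identity of `ℓ²(G)`. The operators `uᵢ = Θ* Θᵢ` lie in the commutant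
because analysis operators intertwine `π` with the left regular representation, and they satisfy
`∑ uᵢ ξᵢ = Θ* δ₁ = η` and `∑ uᵢ uᵢ* = Θ* Θ = q`. For uniqueness, if `∑ wᵢ ξᵢ = 0` then the vectors
`wᵢ* x ∈ Mᵢ` have vanishing joint frame coefficients, so strong disjointness makes them zero.
-/

open scoped InnerProduct
open ContinuousLinearMap

theorem IsOrthoProjOnto.hasOrthogonalProjection {M : Submodule ℂ H} {P : H →L[ℂ] H}
    (hP : IsOrthoProjOnto M P) : M.HasOrthogonalProjection :=
  ⟨fun x => ⟨P x, (hP x).1, (hP x).2⟩⟩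

theorem IsOrthoProjOnto.eq_starProjection {M : Submodule ℂ H} [M.HasOrthogonalProjection]
    {P : H →L[ℂ] H} (hP : IsOrthoProjOnto M P) : P = M.starProjection :=
  ext fun x => (M.eq_starProjection_of_mem_orthogonal (hP x).1 (hP x).2).symm

theorem InCommutant.sub {π : G →* (H ≃ₗᵢ[ℂ] H)} {S T : H →L[ℂ] H} (hS : InCommutant π S)
    (hT : InCommutant π T) : InCommutant π (S - T) := fun g x => by
  simp [hS g x, hT g x]

section ParsevalFrame

variable {ι : Type*}

def IsParsevalFrameIn (v : ι → H) (M : Submodule ℂ H) : Prop :=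
  (∀ i, v i ∈ M) ∧ ∀ f ∈ M, ∑' i, ‖⟪f, v i⟫‖ ^ 2 = ‖f‖ ^ 2

namespace IsParsevalFrameIn

variable {v : ι → H} {M : Submodule ℂ H} [M.HasOrthogonalProjection]

theorem inner_starProjection (hv : IsParsevalFrameIn v M) (i : ι) (f : H) :
    ⟪v i, M.starProjection f⟫ = ⟪v i, f⟫ := by
  rw [← M.inner_starProjection_left_eq_right, M.starProjection_eq_self_iff.2 (hv.1 i)]

theorem hasSum_norm_inner_sq (hv : IsParsevalFrameIn v M) (f : H) :
    HasSum (fun i => ‖⟪v i, f⟫‖ ^ 2) (‖M.starProjection f‖ ^ 2) := by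
  set m := M.starProjection f
  have hcoeff : (fun i => ‖⟪v i, f⟫‖ ^ 2) = fun i => ‖⟪m, v i⟫‖ ^ 2 := by
    ext i
    rw [← hv.inner_starProjection, norm_inner_symm]
  have hsum : ∑' i, ‖⟪m, v i⟫‖ ^ 2 = ‖m‖ ^ 2 := hv.2 m (M.starProjection_apply_mem f)
  rw [hcoeff]
  by_cases hm : m = 0
  · simp [hm, hasSum_zero]
  refine hsum ▸ (Summable.hasSum ?_)
  by_contra hns
  rw [tsum_eq_zero_of_not_summable hns, eq_comm] at hsum
  exact hm (by simpa using hsum)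

theorem memℓp (hv : IsParsevalFrameIn v M) (f : H) : Memℓp (fun i => ⟪v i, f⟫) 2 :=
  memℓp_gen (by simpa using (hv.hasSum_norm_inner_sq f).summable)

theorem norm_mk (hv : IsParsevalFrameIn v M) (f : H) :
    ‖(⟨fun i => ⟪v i, f⟫, hv.memℓp f⟩ : lp (fun _ : ι => ℂ) 2)‖ = ‖M.starProjection f‖ := by
  have h := lp.hasSum_norm (p := 2) (by norm_num) ⟨fun i => ⟪v i, f⟫, hv.memℓp f⟩
  simp only [ENNReal.toReal_ofNat, Real.rpow_two] at h
  exact (sq_eq_sq₀ (norm_nonneg _) (norm_nonneg _)).1 (h.unique (hv.hasSum_norm_inner_sq f))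

def analysis (hv : IsParsevalFrameIn v M) : H →L[ℂ] lp (fun _ : ι => ℂ) 2 :=
  LinearMap.mkContinuous
    { toFun := fun f => ⟨fun i => ⟪v i, f⟫, hv.memℓp f⟩
      map_add' := fun f g => lp.ext <| funext fun i => inner_add_right _ _ _
      map_smul' := fun c f => lp.ext <| funext fun i => inner_smul_right _ _ _ }
    1 fun f => by simpa [hv.norm_mk f] using M.norm_starProjection_apply_le f

theorem analysis_apply (hv : IsParsevalFrameIn v M) (f : H) (i : ι) :
    hv.analysis f i = ⟪v i, f⟫ :=
  rfl

theorem norm_analysis (hv : IsParsevalFrameIn v M) (f : H) :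
    ‖hv.analysis f‖ = ‖M.starProjection f‖ :=
  hv.norm_mk f

theorem analysis_comp_starProjection (hv : IsParsevalFrameIn v M) :
    hv.analysis ∘L M.starProjection = hv.analysis := by
  ext f i
  exact hv.inner_starProjection i f

variable [CompleteSpace H]

theorem starProjection_comp_adjoint_analysis (hv : IsParsevalFrameIn v M) :
    M.starProjection ∘L hv.analysis† = hv.analysis† := by
  rw [← (isSelfAdjoint_starProjection M).adjoint_eq, ← adjoint_comp,
    analysis_comp_starProjection]

theorem adjoint_analysis_comp_analysis (hv : IsParsevalFrameIn v M) :
    hv.analysis† ∘L hv.analysis = M.starProjection := by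
  refine coe_injective ((ext_inner_map _ _).1 fun f => ?_)
  rw [coe_coe, coe_coe, comp_apply,
    adjoint_inner_left, inner_self_eq_norm_sq_to_K, norm_analysis,
    ← inner_self_eq_norm_sq_to_K, M.inner_starProjection_left_eq_right,
    M.starProjection_eq_self_iff.2 (M.starProjection_apply_mem f)]
  exact (M.inner_starProjection_left_eq_right f f).symm

theorem adjoint_analysis_single [DecidableEq ι] (hv : IsParsevalFrameIn v M) (i : ι) :
    (hv.analysis†) (lp.single 2 i 1) = v i := by
  refine ext_inner_right ℂ fun f => ?_
  rw [adjoint_inner_left, lp.inner_single_left, analysis_apply]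
  simp

end IsParsevalFrameIn
end ParsevalFrame

theorem lp.eq_one_of_adjoint_single {ι : Type*} [DecidableEq ι]
    {T : lp (fun _ : ι => ℂ) 2 →L[ℂ] lp (fun _ : ι => ℂ) 2}
    (hT : ∀ i, (T†) (lp.single 2 i 1) = lp.single 2 i 1) : T = 1 := by
  ext c i
  simpa [adjoint_inner_left, lp.inner_single_left] using
    congrArg (⟪·, c⟫) (hT i)

section Orbit

variable {π : G →* (H ≃ₗᵢ[ℂ] H)} {ξ ξ' : H} {M M' : Submodule ℂ H}
  [M.HasOrthogonalProjection] [M'.HasOrthogonalProjection]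

theorem IsParsevalFrameIn.analysis_map (hξ : IsParsevalFrameIn (fun g => π g ξ) M)
    (h : G) (x : H) (g : G) : hξ.analysis (π h x) g = hξ.analysis x (h⁻¹ * g) := by
  rw [analysis_apply, analysis_apply, ← (π h⁻¹).inner_map_map]
  simp

theorem IsParsevalFrameIn.inner_analysis_map_map (hξ : IsParsevalFrameIn (fun g => π g ξ) M)
    (hξ' : IsParsevalFrameIn (fun g => π g ξ') M') (h : G) (x y : H) :
    ⟪hξ.analysis (π h x), hξ'.analysis (π h y)⟫ = ⟪hξ.analysis x, hξ'.analysis y⟫ := by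
  simp only [lp.inner_eq_tsum, hξ.analysis_map, hξ'.analysis_map]
  exact (Equiv.mulLeft h⁻¹).tsum_eq fun g => ⟪hξ.analysis x g, hξ'.analysis y g⟫

theorem IsParsevalFrameIn.inCommutant_adjoint_analysis_comp_analysis [CompleteSpace H]
    (hξ : IsParsevalFrameIn (fun g => π g ξ) M) (hξ' : IsParsevalFrameIn (fun g => π g ξ') M') :
    InCommutant π (hξ'.analysis† ∘L hξ.analysis) := fun h x => by
  refine ext_inner_right ℂ fun y => ?_
  obtain ⟨z, rfl⟩ := (π h).surjective y
  rw [LinearIsometryEquiv.inner_map_map]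
  simp only [comp_apply, adjoint_inner_left, hξ.inner_analysis_map_map]

end Orbit

section Tuple

variable {π : G →* (H ≃ₗᵢ[ℂ] H)} {k : ℕ} {ξ : Fin k → H} {M : Fin k → Submodule ℂ H}

theorem StronglyDisjointTuple.eq_zero_of_sum_inner_eq_zero (hd : StronglyDisjointTuple π ξ M)
    {f : Fin k → H} (hf : ∀ i, f i ∈ M i) (h0 : ∀ g, ∑ i, ⟪f i, π g (ξ i)⟫ = 0) : f = 0 := by
  have h := hd f hf
  simp only [h0, norm_zero, zero_pow two_ne_zero, tsum_zero] at h
  funext i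
  simpa using (Finset.sum_eq_zero_iff_of_nonneg fun i _ => sq_nonneg ‖f i‖).1 h.symm i
    (Finset.mem_univ i)

theorem StronglyDisjointTuple.sum_inner_eq_ite [DecidableEq G] (hd : StronglyDisjointTuple π ξ M)
    (hξ : ∀ i, ξ i ∈ M i) (hnorm : ∑ i, ‖ξ i‖ ^ 2 = 1) (g : G) :
    ∑ i, ⟪ξ i, π g (ξ i)⟫ = if g = 1 then 1 else 0 := by
  set c : G → ℂ := fun g => ∑ i, ⟪ξ i, π g (ξ i)⟫
  have hc1 : c 1 = 1 := by
    simp only [c, map_one, LinearIsometryEquiv.coe_one, id_eq, inner_self_eq_norm_sq_to_K]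
    rw [← Complex.ofReal_one, ← hnorm]
    push_cast
    rfl
  have htsum : ∑' g, ‖c g‖ ^ 2 = 1 := (hd ξ hξ).trans hnorm
  have hs : Summable fun g => ‖c g‖ ^ 2 := by
    by_contra hns
    exact zero_ne_one ((tsum_eq_zero_of_not_summable hns).symm.trans htsum)
  change c g = _
  split_ifs with hg
  · rw [hg, hc1]
  -- the Parseval sum already equals its term at `1`, so all other terms vanish
  have hle := hs.sum_le_tsum {1, g} (fun _ _ => sq_nonneg _)
  rw [Finset.sum_pair (Ne.symm hg), hc1, htsum, norm_one, one_pow] at hle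
  simpa using le_antisymm (by linarith) (sq_nonneg ‖c g‖)

variable [∀ i, (M i).HasOrthogonalProjection]
  (hξ : ∀ i, IsParsevalFrameIn (fun g => π g (ξ i)) (M i))

theorem StronglyDisjointTuple.sum_analysis_apply_self [DecidableEq G]
    (hd : StronglyDisjointTuple π ξ M) (hnorm : ∑ i, ‖ξ i‖ ^ 2 = 1) :
    ∑ i, (hξ i).analysis (ξ i) = lp.single 2 1 1 := by
  have hmem (i : Fin k) : ξ i ∈ M i := by simpa using (hξ i).1 1
  ext g
  have hcoeff : ∑ i, (hξ i).analysis (ξ i) g = conj (∑ i, ⟪ξ i, π g (ξ i)⟫) := by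
    simp [IsParsevalFrameIn.analysis_apply, map_sum, inner_conj_symm]
  rw [lp.coeFn_sum, Finset.sum_apply, hcoeff, hd.sum_inner_eq_ite hmem hnorm, lp.single_apply,
    Pi.single_apply]
  split_ifs <;> simp

variable [CompleteSpace H]

theorem StronglyDisjointTuple.eq_zero_of_sum_apply_eq_zero (hd : StronglyDisjointTuple π ξ M)
    {w : Fin k → H →L[ℂ] H} (hw : ∀ i, InCommutant π (w i))
    (hwM : ∀ i, w i ∘L (M i).starProjection = w i) (h0 : ∑ i, w i (ξ i) = 0) : w = 0 := by
  have hadj (x : H) : (fun i => adjoint (w i) x) = 0 := by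
    refine hd.eq_zero_of_sum_inner_eq_zero (fun i => ?_) (fun g => ?_)
    · rw [← hwM i, adjoint_comp, (isSelfAdjoint_starProjection (M i)).adjoint_eq]
      exact (M i).starProjection_apply_mem _
    · simp only [adjoint_inner_left, hw _ g, ← inner_sum, ← map_sum, h0, map_zero,
        inner_zero_right]
  funext i
  have hi : (w i)† = 0 := ext fun x => congrFun (hadj x) i
  simpa using congrArg adjoint hi

theorem StronglyDisjointTuple.sum_analysis_comp_adjoint_analysis
    (hd : StronglyDisjointTuple π ξ M) (hnorm : ∑ i, ‖ξ i‖ ^ 2 = 1) :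
    ∑ i, (hξ i).analysis ∘L (hξ i).analysis† = 1 := by
  classical
  refine lp.eq_one_of_adjoint_single fun h => ?_
  simp only [map_sum, adjoint_comp, adjoint_adjoint, sum_apply, comp_apply,
    IsParsevalFrameIn.adjoint_analysis_single]
  ext g
  rw [lp.coeFn_sum, Finset.sum_apply]
  simp only [IsParsevalFrameIn.analysis_map]
  rw [← Finset.sum_apply, ← lp.coeFn_sum, hd.sum_analysis_apply_self hξ hnorm]
  simp [lp.single_apply, Pi.single_apply, inv_mul_eq_one, eq_comm]

theorem StronglyDisjointTuple.sum_comp_analysis_comp_adjoint {E : Type*} [NormedAddCommGroup E]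
    [InnerProductSpace ℂ E] [CompleteSpace E] (hd : StronglyDisjointTuple π ξ M)
    (hnorm : ∑ i, ‖ξ i‖ ^ 2 = 1) (A : lp (fun _ : G => ℂ) 2 →L[ℂ] E) :
    ∑ i, (A ∘L (hξ i).analysis) ∘L (A ∘L (hξ i).analysis)† = A ∘L A† :=
  calc ∑ i, (A ∘L (hξ i).analysis) ∘L (A ∘L (hξ i).analysis)†
      = A ∘L (∑ i, (hξ i).analysis ∘L (hξ i).analysis†) ∘L A† := by
        simp only [adjoint_comp, comp_finsetSum, finsetSum_comp, comp_assoc]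
    _ = A ∘L A† := by rw [hd.sum_analysis_comp_adjoint_analysis hξ hnorm, one_def, id_comp]

variable {η : H} {Mη : Submodule ℂ H} [Mη.HasOrthogonalProjection]
  (hη : IsParsevalFrameIn (fun g => π g η) Mη)

theorem StronglyDisjointTuple.sum_adjoint_analysis_comp_analysis_apply_self
    (hd : StronglyDisjointTuple π ξ M) (hnorm : ∑ i, ‖ξ i‖ ^ 2 = 1) :
    ∑ i, (hη.analysis† ∘L (hξ i).analysis) (ξ i) = η := by
  classical
  simp [← map_sum, hd.sum_analysis_apply_self hξ hnorm, hη.adjoint_analysis_single]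

theorem StronglyDisjointTuple.eq_adjoint_analysis_comp_analysis
    (hd : StronglyDisjointTuple π ξ M) (hnorm : ∑ i, ‖ξ i‖ ^ 2 = 1)
    {u : Fin k → H →L[ℂ] H} (hu : ∀ i, InCommutant π (u i))
    (huM : ∀ i, u i ∘L (M i).starProjection = u i) (huη : η = ∑ i, u i (ξ i)) :
    u = fun i => hη.analysis† ∘L (hξ i).analysis :=
  sub_eq_zero.1 <| hd.eq_zero_of_sum_apply_eq_zero
    (fun i => (hu i).sub ((hξ i).inCommutant_adjoint_analysis_comp_analysis hη))
    (fun i => by simp only [Pi.sub_apply, sub_comp, huM, comp_assoc,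
      (hξ i).analysis_comp_starProjection])
    (by simp only [Pi.sub_apply, sub_apply, Finset.sum_sub_distrib, ← huη,
      hd.sum_adjoint_analysis_comp_analysis_apply_self hξ hη hnorm, sub_self])

end Tuple

theorem stmt5_general {G : Type*} [Group G]
    {H : Type*} [NormedAddCommGroup H] [InnerProductSpace ℂ H] [CompleteSpace H]
    (π : G →* (H ≃ₗᵢ[ℂ] H)) (N : ℕ) (ξ : Fin (N + 1) → H)
    (hP : ∀ i : Fin (N + 1), i ≠ Fin.last N → IsParsevalFrameVector π (ξ i))
    (hlast : IsParsevalFrameVectorIn π (ξ (Fin.last N)) (orbitSpan π (ξ (Fin.last N))))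
    (pr : H →L[ℂ] H) (hpr : IsOrthoProjOnto (orbitSpan π (ξ (Fin.last N))) pr)
    (hdisj : StronglyDisjointTuple π ξ
      (fun i => if i = Fin.last N then orbitSpan π (ξ (Fin.last N)) else ⊤))
    (hnorm : ∑ i, ‖ξ i‖ ^ 2 = 1)
    (η : H) (Mη : Submodule ℂ H)
    (hη : IsParsevalFrameVectorIn π η Mη)
    (q : H →L[ℂ] H) (hq : IsOrthoProjOnto Mη q) :
    (∃! u : Fin (N + 1) → (H →L[ℂ] H),
      (∀ i, InCommutant π (u i)) ∧ (∀ i, q ∘L (u i) = u i) ∧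
      (u (Fin.last N)) ∘L pr = u (Fin.last N) ∧
      η = ∑ i, u i (ξ i)) ∧
    (∀ u : Fin (N + 1) → (H →L[ℂ] H),
      (∀ i, InCommutant π (u i)) → (∀ i, q ∘L (u i) = u i) →
      (u (Fin.last N)) ∘L pr = u (Fin.last N) →
      η = ∑ i, u i (ξ i) →
      ∑ i, (u i) ∘L (ContinuousLinearMap.adjoint (u i)) = q) := by
  classical
  set M : Fin (N + 1) → Submodule ℂ H :=
    fun i => if i = Fin.last N then orbitSpan π (ξ (Fin.last N)) else ⊤
  have := hpr.hasOrthogonalProjection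
  have := hq.hasOrthogonalProjection
  have (i : Fin (N + 1)) : (M i).HasOrthogonalProjection := by
    by_cases hi : i = Fin.last N <;> simp only [M, hi, ↓reduceIte] <;> infer_instance
  have hξ (i : Fin (N + 1)) : IsParsevalFrameIn (fun g => π g (ξ i)) (M i) := by
    by_cases hi : i = Fin.last N
    · subst hi
      simp only [M, ↓reduceIte]
      exact hlast
    · simp only [M, hi, ↓reduceIte]
      exact ⟨fun _ => trivial, fun f _ => hP i hi f⟩
  have hη : IsParsevalFrameIn (fun g => π g η) Mη := hη
  obtain rfl := hq.eq_starProjection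
  have hprM : pr = (M (Fin.last N)).starProjection := by simpa [M] using hpr.eq_starProjection
  have huniq (v : Fin (N + 1) → H →L[ℂ] H) (hv : ∀ i, InCommutant π (v i))
      (hvpr : v (Fin.last N) ∘L pr = v (Fin.last N)) (hvη : η = ∑ i, v i (ξ i)) :
      v = fun i => hη.analysis† ∘L (hξ i).analysis := by
    refine hdisj.eq_adjoint_analysis_comp_analysis hξ hη hnorm hv (fun i => ?_) hvη
    by_cases hi : i = Fin.last N
    · subst hi; rwa [← hprM]
    · simp [M, hi, Submodule.starProjection_top]
  refine ⟨⟨_, ⟨fun i => (hξ i).inCommutant_adjoint_analysis_comp_analysis hη,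
      fun i => by rw [← comp_assoc, hη.starProjection_comp_adjoint_analysis],
      by rw [hprM, comp_assoc, (hξ _).analysis_comp_starProjection],
      (hdisj.sum_adjoint_analysis_comp_analysis_apply_self hξ hη hnorm).symm⟩,
    fun v hv => huniq v hv.1 hv.2.2.1 hv.2.2.2⟩, fun v hv _ hvpr hvη => ?_⟩
  rw [huniq v hv hvpr hvη, hdisj.sum_comp_analysis_comp_adjoint hξ hnorm,
    adjoint_adjoint, hη.adjoint_analysis_comp_analysis]

theorem stmt5 {G : Type*} [Group G] [Countable G]
    {H : Type*} [NormedAddCommGroup H] [InnerProductSpace ℂ H] [CompleteSpace H]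
    (hG : IsICC G) (π : G →* (H ≃ₗᵢ[ℂ] H)) (N : ℕ) (ξ : Fin (N + 1) → H)
    (hP : ∀ i : Fin (N + 1), i ≠ Fin.last N → IsParsevalFrameVector π (ξ i))
    (hlast : IsParsevalFrameVectorIn π (ξ (Fin.last N)) (orbitSpan π (ξ (Fin.last N))))
    (pr : H →L[ℂ] H) (hpr : IsOrthoProjOnto (orbitSpan π (ξ (Fin.last N))) pr)
    (hdisj : StronglyDisjointTuple π ξ
      (fun i => if i = Fin.last N then orbitSpan π (ξ (Fin.last N)) else ⊤))
    (hnorm : ∑ i, ‖ξ i‖ ^ 2 = 1)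
    (η : H) (Mη : Submodule ℂ H) (hMη : IsClosed (Mη : Set H))
    (hη : IsParsevalFrameVectorIn π η Mη)
    (q : H →L[ℂ] H) (hq : IsOrthoProjOnto Mη q) (hqc : InCommutant π q) :
    (∃! u : Fin (N + 1) → (H →L[ℂ] H),
      (∀ i, InCommutant π (u i)) ∧ (∀ i, q ∘L (u i) = u i) ∧
      (u (Fin.last N)) ∘L pr = u (Fin.last N) ∧
      η = ∑ i, u i (ξ i)) ∧
    (∀ u : Fin (N + 1) → (H →L[ℂ] H),
      (∀ i, InCommutant π (u i)) → (∀ i, q ∘L (u i) = u i) →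
      (u (Fin.last N)) ∘L pr = u (Fin.last N) →
      η = ∑ i, u i (ξ i) →
      ∑ i, (u i) ∘L (ContinuousLinearMap.adjoint (u i)) = q) :=
  stmt5_general π N ξ hP hlast pr hpr hdisj hnorm η Mη hη q hq
end
end

section
/- Let G be a countable group and π a unitary representation of G on a complex Hilbert space H. Assume ξ₁,…,ξ_N are Parseval frame vectors for H, ξ_{N+1} is a Parseval frame vector for M := closure(span{π(g)ξ_{N+1} : g ∈ G}) with p_r' the orthogonal projection of H onto M, the (N+1)-tuple ξ₁,…,ξ_{N+1} is strongly disjoint, and ∑_{i=1}^{N+1} ‖ξᵢ‖² = 1. Let q' ∈ π(G)' be an orthogonal projection and let u₁',…,u_{N+1}' ∈ π(G)' satisfy q'uᵢ' = uᵢ' for all i, u_{N+1}'p_r' = u_{N+1}', and ∑_{i=1}^{N+1} uᵢ'(uᵢ')* = q'. Then η := u₁'ξ₁ + ⋯ + u_{N+1}'ξ_{N+1} is a Parseval frame vector for the closed subspace q'H. -/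
/-!
Write `η = ∑ uᵢ ξᵢ`. Since every `uᵢ` commutes with `π`, `⟨f, π(g)η⟩ = ∑ᵢ ⟨uᵢ* f, π(g)ξᵢ⟩`.
The condition `u_{N+1} p_r = u_{N+1}` puts `u_{N+1}* f` in the orbit space of `ξ_{N+1}`, so strong
disjointness of the tuple gives `∑_g |⟨f, π(g)η⟩|² = ∑ᵢ ‖uᵢ* f‖² = ⟨f, (∑ᵢ uᵢ uᵢ*) f⟩ = ⟨f, q f⟩`,
which is `‖f‖²` for `f ∈ q H`.
-/

noncomputable section

open scoped ComplexConjugate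

local notation "⟪" x ", " y "⟫" => @inner ℂ _ _ x y

variable {G : Type*} [Group G]
variable {H : Type*} [NormedAddCommGroup H] [InnerProductSpace ℂ H]

open ContinuousLinearMap

namespace IsOrthoProjOnto

variable {M : Submodule ℂ H} {p : H →L[ℂ] H}

theorem hasOrthogonalProjection_s6 (hp : IsOrthoProjOnto M p) : M.HasOrthogonalProjection :=
  ⟨fun x => ⟨p x, hp x⟩⟩

theorem eq_starProjection_s6 [M.HasOrthogonalProjection] (hp : IsOrthoProjOnto M p) :
    p = M.starProjection :=
  ContinuousLinearMap.ext fun x => (M.eq_starProjection_of_mem_orthogonal (hp x).1 (hp x).2).symm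

theorem apply_eq_self (hp : IsOrthoProjOnto M p) {x : H} (hx : x ∈ M) : p x = x := by
  have := hp.hasOrthogonalProjection_s6
  rw [hp.eq_starProjection_s6, M.starProjection_eq_self_iff]
  exact hx

variable [CompleteSpace H]

theorem adjoint_eq (hp : IsOrthoProjOnto M p) : adjoint p = p := by
  have := hp.hasOrthogonalProjection_s6
  rw [hp.eq_starProjection_s6]
  exact isSelfAdjoint_iff'.mp (isSelfAdjoint_starProjection M)

theorem adjoint_apply_mem {F : Type*} [NormedAddCommGroup F] [InnerProductSpace ℂ F]
    [CompleteSpace F] (hp : IsOrthoProjOnto M p) {T : H →L[ℂ] F} (hT : T ∘L p = T) (x : F) :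
    adjoint T x ∈ M := by
  have hTp : p ∘L adjoint T = adjoint T := by rw [← hp.adjoint_eq, ← adjoint_comp, hT]
  rw [← hTp]
  exact (hp _).1

end IsOrthoProjOnto

theorem sum_norm_sq_adjoint_apply {ι E F : Type*} [Fintype ι]
    [NormedAddCommGroup E] [InnerProductSpace ℂ E] [CompleteSpace E]
    [NormedAddCommGroup F] [InnerProductSpace ℂ F] [CompleteSpace F]
    (u : ι → (E →L[ℂ] F)) (f : F) :
    ∑ i, ‖adjoint (u i) f‖ ^ 2 = RCLike.re ⟪f, (∑ i, u i ∘L adjoint (u i)) f⟫ := by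
  simp only [apply_norm_sq_eq_inner_adjoint_right, adjoint_adjoint, sum_apply, inner_sum,
    map_sum]

theorem inner_orbit_sum_apply_eq_sum_inner_adjoint {ι : Type*} [Fintype ι] [CompleteSpace H]
    (π : G →* (H ≃ₗᵢ[ℂ] H)) {u : ι → (H →L[ℂ] H)} (hu : ∀ i, InCommutant π (u i))
    (ξ : ι → H) (f : H) (g : G) :
    ⟪f, π g (∑ i, u i (ξ i))⟫ = ∑ i, ⟪adjoint (u i) f, π g (ξ i)⟫ := by
  rw [map_sum, inner_sum]
  exact Finset.sum_congr rfl fun i _ => by rw [← hu i, adjoint_inner_left]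

theorem isParsevalFrameVectorIn_sum_apply [CompleteSpace H] {k : ℕ} (π : G →* (H ≃ₗᵢ[ℂ] H))
    {ξ : Fin k → H} {M : Fin k → Submodule ℂ H} (hdisj : StronglyDisjointTuple π ξ M)
    {Mq : Submodule ℂ H} {q : H →L[ℂ] H} (hq : IsOrthoProjOnto Mq q) (hqc : InCommutant π q)
    {u : Fin k → (H →L[ℂ] H)} (hu : ∀ i, InCommutant π (u i)) (hqu : ∀ i, q ∘L u i = u i)
    (hM : ∀ i f, adjoint (u i) f ∈ M i) (husum : ∑ i, u i ∘L adjoint (u i) = q) :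
    IsParsevalFrameVectorIn π (∑ i, u i (ξ i)) Mq := by
  have hη : ∑ i, u i (ξ i) ∈ Mq := Mq.sum_mem fun i _ => by
    rw [← hqu i]
    exact (hq _).1
  refine ⟨fun g => ?_, fun f hf => ?_⟩
  · rw [← hq.apply_eq_self hη, ← hqc]
    exact (hq _).1
  · calc ∑' g : G, ‖⟪f, π g (∑ i, u i (ξ i))⟫‖ ^ 2
        = ∑' g : G, ‖∑ i, ⟪adjoint (u i) f, π g (ξ i)⟫‖ ^ 2 := by
          simp only [inner_orbit_sum_apply_eq_sum_inner_adjoint π hu]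
      _ = ∑ i, ‖adjoint (u i) f‖ ^ 2 := hdisj _ fun i => hM i f
      _ = RCLike.re ⟪f, q f⟫ := by rw [sum_norm_sq_adjoint_apply, husum]
      _ = ‖f‖ ^ 2 := by rw [hq.apply_eq_self hf, inner_self_eq_norm_sq]

theorem stmt6_general {G : Type*} [Group G]
    {H : Type*} [NormedAddCommGroup H] [InnerProductSpace ℂ H] [CompleteSpace H]
    (π : G →* (H ≃ₗᵢ[ℂ] H)) (N : ℕ) (ξ : Fin (N + 1) → H)
    (pr : H →L[ℂ] H) (hpr : IsOrthoProjOnto (orbitSpan π (ξ (Fin.last N))) pr)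
    (hdisj : StronglyDisjointTuple π ξ
      (fun i => if i = Fin.last N then orbitSpan π (ξ (Fin.last N)) else ⊤))
    (Mq : Submodule ℂ H)
    (q : H →L[ℂ] H) (hq : IsOrthoProjOnto Mq q) (hqc : InCommutant π q)
    (u : Fin (N + 1) → (H →L[ℂ] H))
    (hu : ∀ i, InCommutant π (u i)) (hqu : ∀ i, q ∘L (u i) = u i)
    (hulast : (u (Fin.last N)) ∘L pr = u (Fin.last N))
    (husum : ∑ i, (u i) ∘L (ContinuousLinearMap.adjoint (u i)) = q) :
    IsParsevalFrameVectorIn π (∑ i, u i (ξ i)) Mq := by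
  refine isParsevalFrameVectorIn_sum_apply π hdisj hq hqc hu hqu (fun i f => ?_) husum
  by_cases hi : i = Fin.last N
  · subst hi
    simpa using hpr.adjoint_apply_mem hulast f
  · simp [hi]

theorem stmt6 {G : Type*} [Group G] [Countable G]
    {H : Type*} [NormedAddCommGroup H] [InnerProductSpace ℂ H] [CompleteSpace H]
    (π : G →* (H ≃ₗᵢ[ℂ] H)) (N : ℕ) (ξ : Fin (N + 1) → H)
    (hP : ∀ i : Fin (N + 1), i ≠ Fin.last N → IsParsevalFrameVector π (ξ i))
    (hlast : IsParsevalFrameVectorIn π (ξ (Fin.last N)) (orbitSpan π (ξ (Fin.last N))))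
    (pr : H →L[ℂ] H) (hpr : IsOrthoProjOnto (orbitSpan π (ξ (Fin.last N))) pr)
    (hdisj : StronglyDisjointTuple π ξ
      (fun i => if i = Fin.last N then orbitSpan π (ξ (Fin.last N)) else ⊤))
    (hnorm : ∑ i, ‖ξ i‖ ^ 2 = 1)
    (Mq : Submodule ℂ H) (hMq : IsClosed (Mq : Set H))
    (q : H →L[ℂ] H) (hq : IsOrthoProjOnto Mq q) (hqc : InCommutant π q)
    (u : Fin (N + 1) → (H →L[ℂ] H))
    (hu : ∀ i, InCommutant π (u i)) (hqu : ∀ i, q ∘L (u i) = u i)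
    (hulast : (u (Fin.last N)) ∘L pr = u (Fin.last N))
    (husum : ∑ i, (u i) ∘L (ContinuousLinearMap.adjoint (u i)) = q) :
    IsParsevalFrameVectorIn π (∑ i, u i (ξ i)) Mq :=
  stmt6_general π N ξ pr hpr hdisj Mq q hq hqc u hu hqu hulast husum
end
end

section
/- Let G be a countable ICC group and π a unitary representation of G on a complex Hilbert space H. Assume ξ₁,…,ξ_N are Parseval frame vectors for H, ξ_{N+1} is a Parseval frame vector for M := closure(span{π(g)ξ_{N+1} : g ∈ G}) with p_r' the orthogonal projection of H onto M, the (N+1)-tuple ξ₁,…,ξ_{N+1} is strongly disjoint, and ∑_{i=1}^{N+1} ‖ξᵢ‖² = 1. Let η = u₁'ξ₁ + ⋯ + u_{N+1}'ξ_{N+1} and ζ = v₁'ξ₁ + ⋯ + v_{N+1}'ξ_{N+1} be Parseval frame vectors for closed subspaces of H, where uᵢ', vᵢ' ∈ π(G)', u_{N+1}'p_r' = u_{N+1}' and v_{N+1}'p_r' = v_{N+1}'. Then η and ζ are strongly disjoint if and only if v₁'(u₁')* + ⋯ + v_{N+1}'(u_{N+1}')* = 0. -/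
noncomputable section

open scoped ComplexConjugate

local notation "⟪" x ", " y "⟫" => @inner ℂ _ _ x y

variable {G : Type*} [Group G]
variable {H : Type*} [NormedAddCommGroup H] [InnerProductSpace ℂ H]

/-!
Polarizing the defining identity of a strongly disjoint tuple shows that the coefficient map
`f ↦ (∑ᵢ ⟪fᵢ, π g ξᵢ⟫)_g` preserves inner products on `M₁ ⊕ ⋯ ⊕ M_{N+1}`. As `uᵢ` commutes
with `π`, `⟪a, π g η⟫ = ∑ᵢ ⟪uᵢ† a, π g ξᵢ⟫`, and `uᵢ† a ∈ Mᵢ` (for the last index because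
`u pr = u` and `pr` is self-adjoint). Hence `∑_g ⟪a, π g η⟫ conj ⟪b, π g ζ⟫ = ∑ᵢ ⟪uᵢ† a, vᵢ† b⟫
= ⟪(∑ᵢ vᵢ uᵢ†) a, b⟫` for all `a, b ∈ H`, and after projecting `a` onto `Mη` and `b` onto `Mζ`
strong disjointness says exactly that all these sums vanish.
-/

section Polarization

variable {𝕜 ι E : Type*} [RCLike 𝕜] [NormedAddCommGroup E] [InnerProductSpace 𝕜 E]

theorem hasSum_norm_sq_of_tsum_norm_sq_eq (L : E →ₗ[𝕜] ι → 𝕜)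
    (hL : ∀ x, ∑' i, ‖L x i‖ ^ 2 = ‖x‖ ^ 2) (x : E) :
    HasSum (fun i => ‖L x i‖ ^ 2) (‖x‖ ^ 2) := by
  -- `∑'` is `0` on non-summable families, so summability is recovered from `x = 0`
  by_cases hs : Summable fun i => ‖L x i‖ ^ 2
  · exact hL x ▸ hs.hasSum
  · have hx : x = 0 := by
      simpa [tsum_eq_zero_of_not_summable hs] using (hL x).symm
    simp [hx] at hs

theorem hasSum_inner_of_tsum_norm_sq_eq (L : E →ₗ[𝕜] ι → 𝕜)
    (hL : ∀ x, ∑' i, ‖L x i‖ ^ 2 = ‖x‖ ^ 2) (x y : E) :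
    HasSum (fun i => inner 𝕜 (L x i) (L y i)) (inner 𝕜 x y) := by
  have h z : HasSum (fun i => (‖L z i‖ : 𝕜) ^ 2) ((‖z‖ : 𝕜) ^ 2) := by
    exact_mod_cast (RCLike.hasSum_ofReal 𝕜).mpr (hasSum_norm_sq_of_tsum_norm_sq_eq L hL z)
  have hI (z : E) i : (RCLike.I : 𝕜) • L z i = L ((RCLike.I : 𝕜) • z) i := by simp
  convert ((((h (x + y)).sub (h (x - y))).add
    (((h (x - (RCLike.I : 𝕜) • y)).sub (h (x + (RCLike.I : 𝕜) • y))).mul_right RCLike.I)).div_const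
      4) using 1
  · ext i
    rw [inner_eq_sum_norm_sq_div_four, hI]
    simp only [map_add, map_sub, Pi.add_apply, Pi.sub_apply]
  · exact inner_eq_sum_norm_sq_div_four x y

end Polarization

theorem StronglyDisjointTuple.hasSum_mul_conj {k : ℕ} {π : G →* (H ≃ₗᵢ[ℂ] H)} {ξ : Fin k → H}
    {M : Fin k → Submodule ℂ H} (h : StronglyDisjointTuple π ξ M) {f f' : Fin k → H}
    (hf : ∀ i, f i ∈ M i) (hf' : ∀ i, f' i ∈ M i) :
    HasSum (fun g => (∑ i, ⟪f i, π g (ξ i)⟫) * conj (∑ i, ⟪f' i, π g (ξ i)⟫))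
      (∑ i, ⟪f i, f' i⟫) := by
  let L : PiLp 2 (fun i => M i) →ₗ[ℂ] G → ℂ :=
    { toFun := fun x g => ∑ i, ⟪π g (ξ i), (x i : H)⟫
      map_add' := fun x y => by ext g; simp [Finset.sum_add_distrib]
      map_smul' := fun c x => by ext g; simp [Finset.mul_sum] }
  have hL (x : PiLp 2 (fun i => M i)) (g : G) : L x g = conj (∑ i, ⟪(x i : H), π g (ξ i)⟫) := by
    simp [L, map_sum, inner_conj_symm]
  have hiso x : ∑' g, ‖L x g‖ ^ 2 = ‖x‖ ^ 2 := by
    simp only [hL, RCLike.norm_conj, PiLp.norm_sq_eq_of_L2, Submodule.coe_norm]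
    exact h (fun i => x i) fun i => (x i).2
  have hF := hasSum_inner_of_tsum_norm_sq_eq L hiso (WithLp.toLp 2 fun i => ⟨f i, hf i⟩)
    (WithLp.toLp 2 fun i => ⟨f' i, hf' i⟩)
  simp only [hL, RCLike.inner_apply, RCLike.conj_conj, PiLp.inner_apply,
    Submodule.coe_inner] at hF
  simpa only [mul_comm] using hF

section Adjoint

variable [CompleteSpace H]

theorem InCommutant.inner_adjoint_apply_left {π : G →* (H ≃ₗᵢ[ℂ] H)} {T : H →L[ℂ] H}
    (hT : InCommutant π T) (a x : H) (g : G) :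
    ⟪ContinuousLinearMap.adjoint T a, π g x⟫ = ⟪a, π g (T x)⟫ := by
  rw [← hT, ContinuousLinearMap.adjoint_inner_left]

theorem IsOrthoProjOnto.adjoint_eq_s7 {M : Submodule ℂ H} {p : H →L[ℂ] H}
    (hp : IsOrthoProjOnto M p) : ContinuousLinearMap.adjoint p = p := by
  refine ((ContinuousLinearMap.eq_adjoint_iff p p).mpr fun x y => ?_).symm
  have hx : ⟪x - p x, p y⟫ = 0 := (Submodule.mem_orthogonal' _ _).mp (hp x).2 _ (hp y).1
  have hy : ⟪p x, y - p y⟫ = 0 := (Submodule.mem_orthogonal _ _).mp (hp y).2 _ (hp x).1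
  rw [inner_sub_left, sub_eq_zero] at hx
  rw [inner_sub_right, sub_eq_zero] at hy
  exact hy.trans hx.symm

theorem IsOrthoProjOnto.adjoint_apply_mem_s7 {M : Submodule ℂ H} {p T : H →L[ℂ] H}
    (hp : IsOrthoProjOnto M p) (hT : T ∘L p = T) (x : H) :
    ContinuousLinearMap.adjoint T x ∈ M := by
  rw [← hT, ContinuousLinearMap.adjoint_comp, hp.adjoint_eq_s7]
  exact (hp _).1

theorem StronglyDisjointTuple.hasSum_mul_conj_of_commutant {k : ℕ}
    {π : G →* (H ≃ₗᵢ[ℂ] H)} {ξ : Fin k → H} {M : Fin k → Submodule ℂ H}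
    (h : StronglyDisjointTuple π ξ M) {u v : Fin k → (H →L[ℂ] H)}
    (hu : ∀ i, InCommutant π (u i)) (hv : ∀ i, InCommutant π (v i)) {a b : H}
    (ha : ∀ i, ContinuousLinearMap.adjoint (u i) a ∈ M i)
    (hb : ∀ i, ContinuousLinearMap.adjoint (v i) b ∈ M i) :
    HasSum (fun g => ⟪a, π g (∑ i, u i (ξ i))⟫ * conj ⟪b, π g (∑ i, v i (ξ i))⟫)
      ⟪(∑ i, v i ∘L ContinuousLinearMap.adjoint (u i)) a, b⟫ := by
  have hexpand {w : Fin k → (H →L[ℂ] H)} (hw : ∀ i, InCommutant π (w i)) (c : H) (g : G) :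
      ⟪c, π g (∑ i, w i (ξ i))⟫ = ∑ i, ⟪ContinuousLinearMap.adjoint (w i) c, π g (ξ i)⟫ := by
    simp only [map_sum, inner_sum, (hw _).inner_adjoint_apply_left]
  have hvalue : ⟪(∑ i, v i ∘L ContinuousLinearMap.adjoint (u i)) a, b⟫
      = ∑ i, ⟪ContinuousLinearMap.adjoint (u i) a, ContinuousLinearMap.adjoint (v i) b⟫ := by
    simp only [FunLike.coe_sum, Finset.sum_apply, sum_inner,
      ContinuousLinearMap.comp_apply, ContinuousLinearMap.adjoint_inner_right]
  simp only [hexpand hu, hexpand hv, hvalue]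
  exact h.hasSum_mul_conj ha hb

end Adjoint

theorem stronglyDisjointPairIn_iff_forall_tsum_eq_zero {π : G →* (H ≃ₗᵢ[ℂ] H)} {H₂ : Type*}
    [NormedAddCommGroup H₂] [InnerProductSpace ℂ H₂] {σ : G →* (H₂ ≃ₗᵢ[ℂ] H₂)} {ξ : H} {ζ : H₂}
    {M : Submodule ℂ H} {M₂ : Submodule ℂ H₂} [M.HasOrthogonalProjection]
    [M₂.HasOrthogonalProjection] (hξ : ∀ g, π g ξ ∈ M) (hζ : ∀ g, σ g ζ ∈ M₂) :
    StronglyDisjointPairIn π σ ξ ζ M M₂ ↔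
      ∀ a b, ∑' g : G, ⟪a, π g ξ⟫ * conj ⟪b, σ g ζ⟫ = 0 := by
  refine ⟨fun h a b => ?_, fun h v _ w _ => h v w⟩
  have hproj := fun g => (M.inner_orthogonalProjectionOnto_eq_of_mem_right ⟨_, hξ g⟩ a).symm
  have hproj₂ := fun g => (M₂.inner_orthogonalProjectionOnto_eq_of_mem_right ⟨_, hζ g⟩ b).symm
  simp only [hproj, hproj₂]
  exact h _ (M.orthogonalProjectionOnto a).2 _ (M₂.orthogonalProjectionOnto b).2

theorem stmt7_general {G : Type*} [Group G]
    {H : Type*} [NormedAddCommGroup H] [InnerProductSpace ℂ H] [CompleteSpace H]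
    (π : G →* (H ≃ₗᵢ[ℂ] H)) (N : ℕ) (ξ : Fin (N + 1) → H)
    (pr : H →L[ℂ] H) (hpr : IsOrthoProjOnto (orbitSpan π (ξ (Fin.last N))) pr)
    (hdisj : StronglyDisjointTuple π ξ
      (fun i => if i = Fin.last N then orbitSpan π (ξ (Fin.last N)) else ⊤))
    (η ζ : H) (Mη Mζ : Submodule ℂ H)
    (hMη : IsClosed (Mη : Set H)) (hMζ : IsClosed (Mζ : Set H))
    (hη : IsParsevalFrameVectorIn π η Mη) (hζ : IsParsevalFrameVectorIn π ζ Mζ)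
    (u v : Fin (N + 1) → (H →L[ℂ] H))
    (hu : ∀ i, InCommutant π (u i)) (hv : ∀ i, InCommutant π (v i))
    (hulast : (u (Fin.last N)) ∘L pr = u (Fin.last N))
    (hvlast : (v (Fin.last N)) ∘L pr = v (Fin.last N))
    (hηdec : η = ∑ i, u i (ξ i)) (hζdec : ζ = ∑ i, v i (ξ i)) :
    StronglyDisjointPairIn π π η ζ Mη Mζ ↔
      ∑ i, (v i) ∘L (ContinuousLinearMap.adjoint (u i)) = 0 := by
  have : CompleteSpace Mη := hMη.completeSpace_coe
  have : CompleteSpace Mζ := hMζ.completeSpace_coe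
  have hmem {w : Fin (N + 1) → (H →L[ℂ] H)} (hw : w (Fin.last N) ∘L pr = w (Fin.last N))
      (x : H) (i : Fin (N + 1)) : ContinuousLinearMap.adjoint (w i) x ∈
        if i = Fin.last N then orbitSpan π (ξ (Fin.last N)) else ⊤ := by
    split_ifs with hi
    · exact hi ▸ hpr.adjoint_apply_mem_s7 hw x
    · exact Submodule.mem_top
  have hsum a b := hdisj.hasSum_mul_conj_of_commutant hu hv (hmem hulast a) (hmem hvlast b)
  rw [stronglyDisjointPairIn_iff_forall_tsum_eq_zero hη.1 hζ.1, hηdec, hζdec]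
  set S := ∑ i, v i ∘L ContinuousLinearMap.adjoint (u i)
  constructor
  · intro h
    ext a
    have hSa := (hsum a (S a)).tsum_eq
    rw [h, eq_comm, inner_self_eq_zero] at hSa
    exact hSa
  · intro h a b
    rw [(hsum a b).tsum_eq, h, _root_.zero_apply, inner_zero_left]

theorem stmt7 {G : Type*} [Group G] [Countable G]
    {H : Type*} [NormedAddCommGroup H] [InnerProductSpace ℂ H] [CompleteSpace H]
    (hG : IsICC G) (π : G →* (H ≃ₗᵢ[ℂ] H)) (N : ℕ) (ξ : Fin (N + 1) → H)
    (hP : ∀ i : Fin (N + 1), i ≠ Fin.last N → IsParsevalFrameVector π (ξ i))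
    (hlast : IsParsevalFrameVectorIn π (ξ (Fin.last N)) (orbitSpan π (ξ (Fin.last N))))
    (pr : H →L[ℂ] H) (hpr : IsOrthoProjOnto (orbitSpan π (ξ (Fin.last N))) pr)
    (hdisj : StronglyDisjointTuple π ξ
      (fun i => if i = Fin.last N then orbitSpan π (ξ (Fin.last N)) else ⊤))
    (hnorm : ∑ i, ‖ξ i‖ ^ 2 = 1)
    (η ζ : H) (Mη Mζ : Submodule ℂ H)
    (hMη : IsClosed (Mη : Set H)) (hMζ : IsClosed (Mζ : Set H))
    (hη : IsParsevalFrameVectorIn π η Mη) (hζ : IsParsevalFrameVectorIn π ζ Mζ)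
    (u v : Fin (N + 1) → (H →L[ℂ] H))
    (hu : ∀ i, InCommutant π (u i)) (hv : ∀ i, InCommutant π (v i))
    (hulast : (u (Fin.last N)) ∘L pr = u (Fin.last N))
    (hvlast : (v (Fin.last N)) ∘L pr = v (Fin.last N))
    (hηdec : η = ∑ i, u i (ξ i)) (hζdec : ζ = ∑ i, v i (ξ i)) :
    StronglyDisjointPairIn π π η ζ Mη Mζ ↔
      ∑ i, (v i) ∘L (ContinuousLinearMap.adjoint (u i)) = 0 :=
  stmt7_general π N ξ pr hpr hdisj η ζ Mη Mζ hMη hMζ hη hζ u v hu hv hulast hvlast hηdec hζdec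
end
end

section
/- Let G be a countable ICC group and π a unitary representation of G on a complex Hilbert space H. Assume ξ₁,…,ξ_N are Parseval frame vectors for H, ξ_{N+1} is a Parseval frame vector for M := closure(span{π(g)ξ_{N+1} : g ∈ G}) with p_r' the orthogonal projection of H onto M, the (N+1)-tuple ξ₁,…,ξ_{N+1} is strongly disjoint, and ∑_{i=1}^{N+1} ‖ξᵢ‖² = 1. Let η = u₁'ξ₁ + ⋯ + u_{N+1}'ξ_{N+1} and ζ = v₁'ξ₁ + ⋯ + v_{N+1}'ξ_{N+1} be Parseval frame vectors for closed subspaces of H, where uᵢ', vᵢ' ∈ π(G)', u_{N+1}'p_r' = u_{N+1}' and v_{N+1}'p_r' = v_{N+1}'. Then η and ζ are unitarily equivalent if and only if (uᵢ')*uⱼ' = (vᵢ')*vⱼ' for all i, j ∈ {1,…,N+1}. -/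
noncomputable section

open scoped ComplexConjugate

local notation "⟪" x ", " y "⟫" => @inner ℂ _ _ x y

variable {G : Type*} [Group G]
variable {H : Type*} [NormedAddCommGroup H] [InnerProductSpace ℂ H]

/-!
Write `Θ_τ : H → ℓ²(G)`, `f ↦ (⟪π g τ, f⟫)_g`, for the analysis operator of a Bessel vector `τ`.
Strong disjointness of `ξ₁, …, ξ_{N+1}` amounts to `Θ_{ξ_i}^* Θ_{ξ_j} = δ_{ij} P_i`, where
`P_i` is the orthogonal projection onto `M_i`. As the `u_k'` commute with `π`,
`Θ_η = ∑ Θ_{ξ_k} u_k'^*`; hence `Θ_η^* Θ_{ξ_j} = u_j' P_j = u_j'`, so that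
`u_i'^* u_j' = Θ_{ξ_i}^* (Θ_η Θ_η^*) Θ_{ξ_j}`, while
`Θ_η Θ_η^* = ∑_{k,l} Θ_{ξ_k} u_k'^* u_l' Θ_{ξ_l}^*`.
Thus the products `u_i'^* u_j'` and the Gram operator `Θ_η Θ_η^*`, whose matrix is
`(⟪π h η, π g η⟫)_{h,g}`, determine each other. Finally, two Parseval frame vectors are unitarily
equivalent iff their Gram operators agree, because `Θ_η` maps `M_η` isometrically onto the range
of `Θ_η Θ_η^*`.
-/

open scoped lp ENNReal

open ContinuousLinearMap

theorem lp.norm_sq_eq_tsum {ι : Type*} {E : ι → Type*} [∀ i, NormedAddCommGroup (E i)]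
    (f : lp E 2) : ‖f‖ ^ 2 = ∑' i, ‖f i‖ ^ 2 := by
  have h := lp.norm_rpow_eq_tsum (by norm_num : 0 < (2 : ℝ≥0∞).toReal) f
  rw [show (2 : ℝ≥0∞).toReal = (2 : ℕ) by norm_num] at h
  simpa only [Real.rpow_natCast] using h

section GramOperator

variable {𝕜 E F ι : Type*} [RCLike 𝕜] [NormedAddCommGroup E] [InnerProductSpace 𝕜 E]
  [CompleteSpace E] [NormedAddCommGroup F] [InnerProductSpace 𝕜 F] [CompleteSpace F]
  [Fintype ι]

theorem sum_comp_adjoint_comp_adjoint_sum (Θ : ι → E →L[𝕜] F) (u : ι → E →L[𝕜] E) :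
    (∑ k, Θ k ∘L adjoint (u k)) ∘L adjoint (∑ k, Θ k ∘L adjoint (u k)) =
      ∑ k, ∑ l, Θ k ∘L (adjoint (u k) ∘L u l) ∘L adjoint (Θ l) := by
  simp only [map_sum, adjoint_comp, adjoint_adjoint, finsetSum_comp, comp_finsetSum, comp_assoc]
  exact Finset.sum_comm

variable [DecidableEq ι] {Θ : ι → E →L[𝕜] F} {P : ι → E →L[𝕜] E}

theorem adjoint_sum_comp_adjoint_comp
    (hΘ : ∀ k j, adjoint (Θ k) ∘L Θ j = if k = j then P j else 0)
    {u : ι → E →L[𝕜] E} (hu : ∀ j, u j ∘L P j = u j) (j : ι) :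
    adjoint (∑ k, Θ k ∘L adjoint (u k)) ∘L Θ j = u j := by
  simp only [map_sum, finsetSum_comp, adjoint_comp, adjoint_adjoint, comp_assoc, hΘ]
  rw [Finset.sum_eq_single j (fun k _ hk => by simp [hk]) (by simp), if_pos rfl, hu]

theorem adjoint_comp_eq_adjoint_comp_sum_comp_adjoint
    (hΘ : ∀ k j, adjoint (Θ k) ∘L Θ j = if k = j then P j else 0)
    {u : ι → E →L[𝕜] E} (hu : ∀ j, u j ∘L P j = u j) (i j : ι) :
    adjoint (u i) ∘L u j = adjoint (Θ i) ∘L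
      ((∑ k, Θ k ∘L adjoint (u k)) ∘L adjoint (∑ k, Θ k ∘L adjoint (u k))) ∘L Θ j := by
  conv_lhs => rw [← adjoint_sum_comp_adjoint_comp hΘ hu i, ← adjoint_sum_comp_adjoint_comp hΘ hu j]
  simp only [adjoint_comp, adjoint_adjoint, comp_assoc]

theorem sum_comp_adjoint_self_eq_iff
    (hΘ : ∀ k j, adjoint (Θ k) ∘L Θ j = if k = j then P j else 0)
    {u v : ι → E →L[𝕜] E} (hu : ∀ j, u j ∘L P j = u j) (hv : ∀ j, v j ∘L P j = v j) :
    (∑ k, Θ k ∘L adjoint (u k)) ∘L adjoint (∑ k, Θ k ∘L adjoint (u k)) =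
        (∑ k, Θ k ∘L adjoint (v k)) ∘L adjoint (∑ k, Θ k ∘L adjoint (v k)) ↔
      ∀ i j, adjoint (u i) ∘L u j = adjoint (v i) ∘L v j := by
  refine ⟨fun h i j => ?_, fun h => ?_⟩
  · rw [adjoint_comp_eq_adjoint_comp_sum_comp_adjoint hΘ hu,
      adjoint_comp_eq_adjoint_comp_sum_comp_adjoint hΘ hv, h]
  · simp only [sum_comp_adjoint_comp_adjoint_sum, h]

end GramOperator

section Analysis

variable {π : G →* (H ≃ₗᵢ[ℂ] H)} {τ : H}

theorem IsBesselVector.memℓp (hτ : IsBesselVector π τ) (f : H) :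
    Memℓp (fun g => ⟪π g τ, f⟫) 2 := by
  obtain ⟨B, -, hB⟩ := hτ
  refine memℓp_gen ?_
  rw [show (2 : ℝ≥0∞).toReal = (2 : ℕ) by norm_num]
  simp only [Real.rpow_natCast]
  refine summable_of_sum_le (c := B * ‖f‖ ^ 2) (fun g => by positivity) fun s => ?_
  simpa [norm_inner_symm] using hB f s

theorem IsBesselVector.tsum_le (hτ : IsBesselVector π τ) :
    ∃ B : ℝ, 0 ≤ B ∧ ∀ f : H, ∑' g, ‖⟪f, π g τ⟫‖ ^ 2 ≤ B * ‖f‖ ^ 2 := by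
  obtain ⟨B, hB0, hB⟩ := hτ
  exact ⟨B, hB0.le, fun f => Real.tsum_le_of_sum_le (fun g => by positivity) (hB f)⟩

def analysisOp (hτ : IsBesselVector π τ) : H →L[ℂ] ℓ²(G, ℂ) :=
  LinearMap.mkContinuousOfExistsBound
    { toFun f := ⟨fun g => ⟪π g τ, f⟫, hτ.memℓp f⟩
      map_add' f f' := lp.ext <| funext fun g => inner_add_right _ _ _
      map_smul' c f := lp.ext <| funext fun g => inner_smul_right _ _ _ } <| by
    obtain ⟨B, hB0, hB⟩ := hτ.tsum_le
    refine ⟨√B, fun f => ?_⟩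
    rw [← Real.sqrt_sq (norm_nonneg _), ← Real.sqrt_sq (norm_nonneg f), ← Real.sqrt_mul hB0]
    refine Real.sqrt_le_sqrt ?_
    rw [lp.norm_sq_eq_tsum]
    simpa [norm_inner_symm] using hB f

@[simp]
theorem analysisOp_apply (hτ : IsBesselVector π τ) (f : H) (g : G) :
    analysisOp hτ f g = ⟪π g τ, f⟫ :=
  rfl

theorem norm_analysisOp_sq (hτ : IsBesselVector π τ) (f : H) :
    ‖analysisOp hτ f‖ ^ 2 = ∑' g, ‖⟪f, π g τ⟫‖ ^ 2 := by
  simp [lp.norm_sq_eq_tsum, norm_inner_symm]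

theorem adjoint_analysisOp_single [CompleteSpace H] [DecidableEq G] (hτ : IsBesselVector π τ)
    (g : G) :
    adjoint (analysisOp hτ) (lp.single 2 g 1) = π g τ :=
  ext_inner_left ℂ fun f => by
    simp [adjoint_inner_right, lp.inner_single_right]

theorem analysisOp_comp_adjoint_single [CompleteSpace H] [DecidableEq G] (hτ : IsBesselVector π τ)
    (g : G) :
    (analysisOp hτ ∘L adjoint (analysisOp hτ)) (lp.single 2 g 1) = analysisOp hτ (π g τ) := by
  rw [comp_apply, adjoint_analysisOp_single]

end Analysis

section ParsevalIn

variable {π : G →* (H ≃ₗᵢ[ℂ] H)} {τ : H} {M : Submodule ℂ H}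

theorem IsParsevalFrameVectorIn.hasSum (hτ : IsParsevalFrameVectorIn π τ M) {f : H}
    (hf : f ∈ M) : HasSum (fun g => ‖⟪f, π g τ⟫‖ ^ 2) (‖f‖ ^ 2) := by
  rcases eq_or_ne f 0 with rfl | hf0
  · simp
  rw [← hτ.2 f hf]
  -- a non-summable family has `∑' = 0`, which would force `f = 0`
  refine Summable.hasSum (not_not.mp fun hs => hf0 ?_)
  have h := hτ.2 f hf
  rw [tsum_eq_zero_of_not_summable hs] at h
  simpa using h.symm

theorem IsParsevalFrameVectorIn.norm_analysisOp (hτ : IsParsevalFrameVectorIn π τ M)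
    (hb : IsBesselVector π τ) {f : H} (hf : f ∈ M) : ‖analysisOp hb f‖ = ‖f‖ := by
  refine (pow_left_inj₀ (norm_nonneg _) (norm_nonneg _) two_ne_zero).mp ?_
  rw [norm_analysisOp_sq, (hτ.hasSum hf).tsum_eq]

theorem inner_starProjection_left_of_mem [M.HasOrthogonalProjection] (f : H) {x : H}
    (hx : x ∈ M) : ⟪M.starProjection f, x⟫ = ⟪f, x⟫ := by
  rw [Submodule.inner_starProjection_left_eq_right, Submodule.starProjection_eq_self_iff.mpr hx]

variable [M.HasOrthogonalProjection]

theorem IsParsevalFrameVectorIn.isBesselVector (hτ : IsParsevalFrameVectorIn π τ M) :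
    IsBesselVector π τ := by
  refine ⟨1, one_pos, fun f s => ?_⟩
  calc ∑ g ∈ s, ‖⟪f, π g τ⟫‖ ^ 2 = ∑ g ∈ s, ‖⟪M.starProjection f, π g τ⟫‖ ^ 2 := by
        simp only [inner_starProjection_left_of_mem f (hτ.1 _)]
    _ ≤ ‖M.starProjection f‖ ^ 2 :=
        sum_le_hasSum s (fun _ _ => by positivity) (hτ.hasSum (M.starProjection_apply_mem f))
    _ ≤ 1 * ‖f‖ ^ 2 := by
        rw [one_mul]
        gcongr
        exact M.norm_starProjection_apply_le f

theorem analysisOp_comp_starProjection (hτM : ∀ g, π g τ ∈ M) (hb : IsBesselVector π τ) :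
    analysisOp hb ∘L M.starProjection = analysisOp hb :=
  ext fun f => lp.ext <| funext fun g => by
    simp [← Submodule.inner_starProjection_left_eq_right,
      Submodule.starProjection_eq_self_iff.mpr (hτM g)]

def IsParsevalFrameVectorIn.analysisIsometry (hτ : IsParsevalFrameVectorIn π τ M) :
    M →ₗᵢ[ℂ] ℓ²(G, ℂ) where
  toLinearMap := (analysisOp hτ.isBesselVector).toLinearMap ∘ₗ M.subtype
  norm_map' m := hτ.norm_analysisOp hτ.isBesselVector m.2

theorem IsParsevalFrameVectorIn.adjoint_analysisOp_comp_analysisOp [CompleteSpace H]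
    (hτ : IsParsevalFrameVectorIn π τ M) :
    adjoint (analysisOp hτ.isBesselVector) ∘L analysisOp hτ.isBesselVector = M.starProjection := by
  set Θ := analysisOp hτ.isBesselVector
  have hΘP := analysisOp_comp_starProjection hτ.1 hτ.isBesselVector
  refine ext fun x => ext_inner_left ℂ fun y => ?_
  calc ⟪y, adjoint Θ (Θ x)⟫ = ⟪Θ (M.starProjection y), Θ (M.starProjection x)⟫ := by
        rw [adjoint_inner_right, ← comp_apply Θ, ← comp_apply Θ, hΘP]
    _ = ⟪M.starProjection y, M.starProjection x⟫ :=
        hτ.analysisIsometry.inner_map_map ⟨_, M.starProjection_apply_mem y⟩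
          ⟨_, M.starProjection_apply_mem x⟩
    _ = ⟪y, M.starProjection x⟫ :=
        inner_starProjection_left_of_mem y (M.starProjection_apply_mem x)

end ParsevalIn

section UnitaryEquivalence

variable [CompleteSpace H] {π : G →* (H ≃ₗᵢ[ℂ] H)} {τ : H} {M : Submodule ℂ H}
  [M.HasOrthogonalProjection]

theorem IsParsevalFrameVectorIn.range_analysisIsometry (hτ : IsParsevalFrameVectorIn π τ M) :
    LinearMap.range hτ.analysisIsometry.toLinearMap =
      LinearMap.range (analysisOp hτ.isBesselVector ∘L adjoint (analysisOp hτ.isBesselVector) :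
        ℓ²(G, ℂ) →ₗ[ℂ] ℓ²(G, ℂ)) := by
  set Θ := analysisOp hτ.isBesselVector
  have hΘΘ := hτ.adjoint_analysisOp_comp_analysisOp
  apply le_antisymm
  · rintro _ ⟨m, rfl⟩
    refine ⟨Θ m, ?_⟩
    change Θ (adjoint Θ (Θ m)) = Θ m
    rw [← comp_apply (adjoint Θ), hΘΘ, Submodule.starProjection_eq_self_iff.mpr m.2]
  · rintro _ ⟨a, rfl⟩
    refine ⟨⟨_, M.starProjection_apply_mem (adjoint Θ a)⟩, ?_⟩
    change Θ (M.starProjection (adjoint Θ a)) = Θ (adjoint Θ a)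
    rw [← comp_apply Θ, analysisOp_comp_starProjection hτ.1]

variable {σ : H} {N : Submodule ℂ H} [N.HasOrthogonalProjection]

theorem exists_linearIsometryEquiv_iff (hτ : IsParsevalFrameVectorIn π τ M)
    (hσ : IsParsevalFrameVectorIn π σ N) :
    (∃ U : M ≃ₗᵢ[ℂ] N, ∀ g : G, (U ⟨π g τ, hτ.1 g⟩ : H) = π g σ) ↔
      analysisOp hτ.isBesselVector ∘L adjoint (analysisOp hτ.isBesselVector) =
        analysisOp hσ.isBesselVector ∘L adjoint (analysisOp hσ.isBesselVector) := by
  classical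
  constructor
  · rintro ⟨U, hU⟩
    refine lp.ext_continuousLinearMap (by norm_num) fun g =>
      ext_ring <| lp.ext <| funext fun h => ?_
    simp only [comp_apply, lp.singleContinuousLinearMap_apply, adjoint_analysisOp_single,
      analysisOp_apply]
    rw [← hU h, ← hU g, ← Submodule.coe_inner, U.inner_map_map]
    rfl
  · intro hΓ
    have hrange : LinearMap.range hτ.analysisIsometry.toLinearMap =
        LinearMap.range hσ.analysisIsometry.toLinearMap := by
      rw [hτ.range_analysisIsometry, hσ.range_analysisIsometry, hΓ]
    refine ⟨hτ.analysisIsometry.equivRange.trans <| (LinearIsometryEquiv.ofEq _ _ hrange).trans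
      hσ.analysisIsometry.equivRange.symm, fun g => ?_⟩
    have horbit : LinearIsometryEquiv.ofEq _ _ hrange (hτ.analysisIsometry.equivRange ⟨π g τ, hτ.1 g⟩)
        = hσ.analysisIsometry.equivRange ⟨π g σ, hσ.1 g⟩ := by
      ext1
      change analysisOp hτ.isBesselVector (π g τ) = analysisOp hσ.isBesselVector (π g σ)
      rw [← analysisOp_comp_adjoint_single, hΓ, analysisOp_comp_adjoint_single]
    rw [LinearIsometryEquiv.trans_apply, LinearIsometryEquiv.trans_apply, horbit,
      LinearIsometryEquiv.symm_apply_apply]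

end UnitaryEquivalence

instance [CompleteSpace H] (π : G →* (H ≃ₗᵢ[ℂ] H)) (τ : H) : CompleteSpace (orbitSpan π τ) :=
  Submodule.topologicalClosure.completeSpace _

theorem apply_mem_orbitSpan (π : G →* (H ≃ₗᵢ[ℂ] H)) (τ : H) (g : G) : π g τ ∈ orbitSpan π τ :=
  Submodule.le_topologicalClosure _ (Submodule.subset_span ⟨g, rfl⟩)

theorem IsOrthoProjOnto.starProjection_eq {M : Submodule ℂ H} [M.HasOrthogonalProjection]
    {p : H →L[ℂ] H} (hp : IsOrthoProjOnto M p) : M.starProjection = p :=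
  ext fun x => Submodule.eq_starProjection_of_mem_orthogonal (hp x).1 (hp x).2

theorem inner_eq_zero_of_forall_norm_add_smul_sq {E : Type*} [NormedAddCommGroup E]
    [InnerProductSpace ℂ E] {x y : E}
    (h : ∀ c : ℂ, ‖c‖ = 1 → ‖x + c • y‖ ^ 2 = ‖x‖ ^ 2 + ‖y‖ ^ 2) : ⟪x, y⟫ = 0 := by
  have hre : ∀ c : ℂ, ‖c‖ = 1 → (c * ⟪x, y⟫).re = 0 := fun c hc => by
    have := h c hc
    rw [norm_add_sq (𝕜 := ℂ), norm_smul, hc, one_mul, inner_smul_right] at this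
    simpa using this
  refine Complex.ext (by simpa using hre 1 norm_one) ?_
  simpa using hre Complex.I Complex.norm_I

theorem Fintype.sum_inner_single {ι E : Type*} [Fintype ι] [DecidableEq ι] [NormedAddCommGroup E]
    [InnerProductSpace ℂ E] (i : ι) (a : E) (v : ι → E) :
    ∑ l, ⟪(Pi.single i a : ι → E) l, v l⟫ = ⟪a, v i⟫ := by
  rw [Fintype.sum_eq_single i fun l hl => by simp [hl], Pi.single_eq_same]

section StronglyDisjoint

variable {π : G →* (H ≃ₗᵢ[ℂ] H)} {k : ℕ} {ξ : Fin k → H} {M : Fin k → Submodule ℂ H}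

theorem StronglyDisjointTuple.isParsevalFrameVectorIn (hd : StronglyDisjointTuple π ξ M)
    (hξM : ∀ i g, π g (ξ i) ∈ M i) (i : Fin k) : IsParsevalFrameVectorIn π (ξ i) (M i) := by
  refine ⟨hξM i, fun f hf => ?_⟩
  have h := hd (Pi.single i f) fun j => by
    rcases eq_or_ne j i with rfl | hj
    · simpa using hf
    · simp [hj]
  rwa [Fintype.sum_eq_single i fun l hl => by simp [hl], Pi.single_eq_same,
    tsum_congr fun g => by rw [Fintype.sum_inner_single]] at h

theorem StronglyDisjointTuple.norm_analysisOp_add_sq (hd : StronglyDisjointTuple π ξ M)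
    (hb : ∀ i, IsBesselVector π (ξ i)) {i j : Fin k} (hij : i ≠ j) {a b : H} (ha : a ∈ M i)
    (hb' : b ∈ M j) : ‖analysisOp (hb i) a + analysisOp (hb j) b‖ ^ 2 = ‖a‖ ^ 2 + ‖b‖ ^ 2 := by
  have h := hd (Pi.single i a + Pi.single j b) fun l => by
    rcases eq_or_ne l i with rfl | hli
    · simpa [hij] using ha
    rcases eq_or_ne l j with rfl | hlj
    · simpa [hli] using hb'
    · simp [hli, hlj]
  simp only [Pi.add_apply, inner_add_left, Finset.sum_add_distrib, Fintype.sum_inner_single] at h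
  rw [Fintype.sum_eq_add i j hij fun l hl => by simp [hl.1, hl.2]] at h
  simp only [Pi.single_eq_same, Pi.single_eq_of_ne hij, Pi.single_eq_of_ne hij.symm,
    add_zero, zero_add] at h
  rw [lp.norm_sq_eq_tsum, ← h]
  refine tsum_congr fun g => ?_
  rw [lp.coeFn_add, Pi.add_apply, analysisOp_apply, analysisOp_apply, ← Complex.norm_conj,
    map_add, inner_conj_symm, inner_conj_symm]

theorem StronglyDisjointTuple.inner_analysisOp_eq_zero (hd : StronglyDisjointTuple π ξ M)
    (hξM : ∀ i g, π g (ξ i) ∈ M i) (hb : ∀ i, IsBesselVector π (ξ i)) {i j : Fin k}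
    (hij : i ≠ j) {a b : H} (ha : a ∈ M i) (hb' : b ∈ M j) :
    ⟪analysisOp (hb i) a, analysisOp (hb j) b⟫ = 0 := by
  refine inner_eq_zero_of_forall_norm_add_smul_sq fun c hc => ?_
  rw [← map_smul, hd.norm_analysisOp_add_sq hb hij ha ((M j).smul_mem c hb'), norm_smul, hc,
    one_mul, (hd.isParsevalFrameVectorIn hξM i).norm_analysisOp _ ha,
    (hd.isParsevalFrameVectorIn hξM j).norm_analysisOp _ hb']

theorem StronglyDisjointTuple.adjoint_analysisOp_comp_analysisOp [CompleteSpace H]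
    [∀ i, (M i).HasOrthogonalProjection] (hd : StronglyDisjointTuple π ξ M)
    (hξM : ∀ i g, π g (ξ i) ∈ M i) (hb : ∀ i, IsBesselVector π (ξ i)) (i j : Fin k) :
    adjoint (analysisOp (hb i)) ∘L analysisOp (hb j) =
      if i = j then (M j).starProjection else 0 := by
  split_ifs with hij
  · subst hij
    exact (hd.isParsevalFrameVectorIn hξM i).adjoint_analysisOp_comp_analysisOp
  refine ext fun x => ext_inner_left ℂ fun y => ?_
  rw [comp_apply, adjoint_inner_right, zero_apply, inner_zero_right,
    ← analysisOp_comp_starProjection (hξM i) (hb i),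
    ← analysisOp_comp_starProjection (hξM j) (hb j)]
  exact hd.inner_analysisOp_eq_zero hξM hb hij ((M i).starProjection_apply_mem y)
    ((M j).starProjection_apply_mem x)

end StronglyDisjoint

theorem analysisOp_eq_sum_comp_adjoint [CompleteSpace H] {π : G →* (H ≃ₗᵢ[ℂ] H)} {ι : Type*}
    [Fintype ι] {ξ : ι → H} {u : ι → H →L[ℂ] H} (hu : ∀ i, InCommutant π (u i)) {η : H}
    (hη : η = ∑ i, u i (ξ i)) (hbη : IsBesselVector π η) (hb : ∀ i, IsBesselVector π (ξ i)) :
    analysisOp hbη = ∑ i, analysisOp (hb i) ∘L adjoint (u i) := by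
  refine ext fun f => lp.ext <| funext fun g => ?_
  simp only [analysisOp_apply, sum_apply, comp_apply, lp.coeFn_sum, Finset.sum_apply,
    adjoint_inner_right, hη, map_sum, sum_inner]
  exact Finset.sum_congr rfl fun i _ => by rw [hu]

theorem stmt8_general {G : Type*} [Group G]
    {H : Type*} [NormedAddCommGroup H] [InnerProductSpace ℂ H] [CompleteSpace H]
    (π : G →* (H ≃ₗᵢ[ℂ] H)) (N : ℕ) (ξ : Fin (N + 1) → H)
    (pr : H →L[ℂ] H) (hpr : IsOrthoProjOnto (orbitSpan π (ξ (Fin.last N))) pr)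
    (hdisj : StronglyDisjointTuple π ξ
      (fun i => if i = Fin.last N then orbitSpan π (ξ (Fin.last N)) else ⊤))
    (η ζ : H) (Mη Mζ : Submodule ℂ H)
    (hMη : IsClosed (Mη : Set H)) (hMζ : IsClosed (Mζ : Set H))
    (hη : IsParsevalFrameVectorIn π η Mη) (hζ : IsParsevalFrameVectorIn π ζ Mζ)
    (u v : Fin (N + 1) → (H →L[ℂ] H))
    (hu : ∀ i, InCommutant π (u i)) (hv : ∀ i, InCommutant π (v i))
    (hulast : (u (Fin.last N)) ∘L pr = u (Fin.last N))
    (hvlast : (v (Fin.last N)) ∘L pr = v (Fin.last N))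
    (hηdec : η = ∑ i, u i (ξ i)) (hζdec : ζ = ∑ i, v i (ξ i)) :
    (∃ U : ↥Mη ≃ₗᵢ[ℂ] ↥Mζ, ∀ g : G, (U ⟨π g η, hη.1 g⟩ : H) = π g ζ) ↔
      ∀ i j, (ContinuousLinearMap.adjoint (u i)) ∘L (u j) =
        (ContinuousLinearMap.adjoint (v i)) ∘L (v j) := by
  have := hMη.completeSpace_coe
  have := hMζ.completeSpace_coe
  set M : Fin (N + 1) → Submodule ℂ H :=
    fun i => if i = Fin.last N then orbitSpan π (ξ (Fin.last N)) else ⊤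
  have : ∀ i, (M i).HasOrthogonalProjection := fun i => by
    dsimp only [M]
    split_ifs <;> infer_instance
  have hξM : ∀ i g, π g (ξ i) ∈ M i := fun i g => by
    dsimp only [M]
    split_ifs with h
    exacts [h ▸ apply_mem_orbitSpan π _ g, trivial]
  have hP : ∀ j, (M j).starProjection = if j = Fin.last N then pr else ContinuousLinearMap.id ℂ H :=
    fun j => IsOrthoProjOnto.starProjection_eq fun x => by
      dsimp only [M]
      split_ifs
      exacts [hpr x, ⟨trivial, by simp⟩]
  have hcomp : ∀ w : Fin (N + 1) → H →L[ℂ] H, w (Fin.last N) ∘L pr = w (Fin.last N) →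
      ∀ j, w j ∘L (M j).starProjection = w j := fun w hw j => by
    rw [hP]
    split_ifs with h
    exacts [h ▸ hw, comp_id _]
  have hb i := (hdisj.isParsevalFrameVectorIn hξM i).isBesselVector
  rw [exists_linearIsometryEquiv_iff hη hζ, analysisOp_eq_sum_comp_adjoint hu hηdec _ hb,
    analysisOp_eq_sum_comp_adjoint hv hζdec _ hb]
  exact sum_comp_adjoint_self_eq_iff (hdisj.adjoint_analysisOp_comp_analysisOp hξM hb)
    (hcomp u hulast) (hcomp v hvlast)

theorem stmt8 {G : Type*} [Group G] [Countable G]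
    {H : Type*} [NormedAddCommGroup H] [InnerProductSpace ℂ H] [CompleteSpace H]
    (hG : IsICC G) (π : G →* (H ≃ₗᵢ[ℂ] H)) (N : ℕ) (ξ : Fin (N + 1) → H)
    (hP : ∀ i : Fin (N + 1), i ≠ Fin.last N → IsParsevalFrameVector π (ξ i))
    (hlast : IsParsevalFrameVectorIn π (ξ (Fin.last N)) (orbitSpan π (ξ (Fin.last N))))
    (pr : H →L[ℂ] H) (hpr : IsOrthoProjOnto (orbitSpan π (ξ (Fin.last N))) pr)
    (hdisj : StronglyDisjointTuple π ξ
      (fun i => if i = Fin.last N then orbitSpan π (ξ (Fin.last N)) else ⊤))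
    (hnorm : ∑ i, ‖ξ i‖ ^ 2 = 1)
    (η ζ : H) (Mη Mζ : Submodule ℂ H)
    (hMη : IsClosed (Mη : Set H)) (hMζ : IsClosed (Mζ : Set H))
    (hη : IsParsevalFrameVectorIn π η Mη) (hζ : IsParsevalFrameVectorIn π ζ Mζ)
    (u v : Fin (N + 1) → (H →L[ℂ] H))
    (hu : ∀ i, InCommutant π (u i)) (hv : ∀ i, InCommutant π (v i))
    (hulast : (u (Fin.last N)) ∘L pr = u (Fin.last N))
    (hvlast : (v (Fin.last N)) ∘L pr = v (Fin.last N))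
    (hηdec : η = ∑ i, u i (ξ i)) (hζdec : ζ = ∑ i, v i (ξ i)) :
    (∃ U : ↥Mη ≃ₗᵢ[ℂ] ↥Mζ, ∀ g : G, (U ⟨π g η, hη.1 g⟩ : H) = π g ζ) ↔
      ∀ i j, (ContinuousLinearMap.adjoint (u i)) ∘L (u j) =
        (ContinuousLinearMap.adjoint (v i)) ∘L (v j) :=
  stmt8_general π N ξ pr hpr hdisj η ζ Mη Mζ hMη hMζ hη hζ u v hu hv hulast hvlast hηdec hζdec
end
end

section
/- Let G be a countable group, π a unitary representation of G on a complex Hilbert space H, and K a subgroup of G of finite index N. Suppose η ∈ H is a Parseval frame vector for H and the family {π(h)η : h ∈ K} is an orthogonal basis for the whole space H (that is, the vectors π(h)η, h ∈ K, are nonzero, pairwise orthogonal, and their span is dense in H). Then ‖η‖² = 1/N. -/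
noncomputable section

open scoped ComplexConjugate

local notation "⟪" x ", " y "⟫" => @inner ℂ _ _ x y

variable {G : Type*} [Group G]
variable {H : Type*} [NormedAddCommGroup H] [InnerProductSpace ℂ H]

/-! When `{π(h)η : h ∈ K}` is an orthogonal basis of vectors of norm `‖η‖`, every `x` satisfies
`∑_{h ∈ K} |⟨x, π(h)η⟩|² = ‖η‖² ‖x‖²`. Splitting the Parseval identity for `f = η` along the left
cosets `tK` and using `⟨η, π(th)η⟩ = ⟨π(t⁻¹)η, π(h)η⟩`, each coset contributes `‖η‖⁴`, so
`‖η‖² = N ‖η‖⁴`. -/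

section Parseval

variable {ι 𝕜 E : Type*} [RCLike 𝕜] [NormedAddCommGroup E] [InnerProductSpace 𝕜 E]
  [CompleteSpace E]

open Submodule

theorem Orthonormal.hasSum_norm_inner_sq {v : ι → E} (hv : Orthonormal 𝕜 v)
    (hsp : ⊤ ≤ (span 𝕜 (Set.range v)).topologicalClosure) (x : E) :
    HasSum (fun i => ‖inner 𝕜 (v i) x‖ ^ 2) (‖x‖ ^ 2) := by
  simpa [HilbertBasis.repr_apply_apply] using
    lp.hasSum_norm (p := 2) (by norm_num) ((HilbertBasis.mk hv hsp).repr x)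

theorem hasSum_norm_inner_sq_of_orthogonal {v : ι → E} {r : ℝ} (hr : r ≠ 0)
    (hnorm : ∀ i, ‖v i‖ = r) (horth : Pairwise fun i j => inner 𝕜 (v i) (v j) = 0)
    (hsp : ⊤ ≤ (span 𝕜 (Set.range v)).topologicalClosure) (x : E) :
    HasSum (fun i => ‖inner 𝕜 (v i) x‖ ^ 2) (r ^ 2 * ‖x‖ ^ 2) := by
  classical
  have hon : Orthonormal 𝕜 fun i => (r : 𝕜)⁻¹ • v i := by
    rw [orthonormal_iff_ite]
    intro i j
    split_ifs with hij
    · subst hij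
      have hr' : (r : 𝕜) ≠ 0 := RCLike.ofReal_ne_zero.mpr hr
      rw [inner_smul_left, inner_smul_right, inner_self_eq_norm_sq_to_K, hnorm, map_inv₀,
        RCLike.conj_ofReal]
      field_simp
    · simp [inner_smul_left, inner_smul_right, horth hij]
  have hspan : span 𝕜 (Set.range fun i => (r : 𝕜)⁻¹ • v i) = span 𝕜 (Set.range v) := by
    rw [Set.range_smul, span_smul_eq_of_isUnit]
    simpa using hr
  have hrescale : (fun i => ‖inner 𝕜 (v i) x‖ ^ 2)
      = fun i => r ^ 2 * ‖inner 𝕜 ((r : 𝕜)⁻¹ • v i) x‖ ^ 2 := by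
    ext i
    rw [inner_smul_left, norm_mul, mul_pow, RCLike.norm_conj, norm_inv, RCLike.norm_ofReal, inv_pow,
      sq_abs, mul_inv_cancel_left₀ (pow_ne_zero 2 hr)]
  rw [hrescale]
  exact (hon.hasSum_norm_inner_sq (hspan ▸ hsp) x).mul_left (r ^ 2)

end Parseval

section CosetSums

variable {α : Type*} (K : Subgroup G)

theorem hasSum_quotient_const_of_hasSum_mul [AddCommMonoid α] [TopologicalSpace α]
    [ContinuousAdd α] [RegularSpace α] {F : G → α} {s c : α} (hF : HasSum F s)
    (hc : ∀ t : G, HasSum (fun h : K => F (t * h)) c) :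
    HasSum (fun _ : G ⧸ K => c) s := by
  refine ((Equiv.sigmaFiberEquiv (QuotientGroup.mk : G → G ⧸ K)).hasSum_iff.mpr hF).sigma ?_
  intro q
  induction q using QuotientGroup.induction_on with | H t => ?_
  let e : K ≃ {g : G // (g : G ⧸ K) = t} :=
    (Subgroup.leftCosetEquivSubgroup t).symm.trans
      (Equiv.setCongr (QuotientGroup.eq_class_eq_leftCoset K t).symm)
  exact e.hasSum_iff.mp (hc t)

theorem Subgroup.index_nsmul_eq_of_hasSum_mul [AddCommGroup α] [TopologicalSpace α]
    [IsTopologicalAddGroup α] [T2Space α] {F : G → α} {s c : α} (hF : HasSum F s)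
    (hc : ∀ t : G, HasSum (fun h : K => F (t * h)) c) :
    K.index • c = s := by
  -- For infinite index both sides vanish: `K.index = 0`, and a summable constant family over an
  -- infinite type is `0`.
  rw [Subgroup.index, ← tsum_const, (hasSum_quotient_const_of_hasSum_mul K hF hc).tsum_eq]

end CosetSums

theorem inner_map_mul_eq_inner_map_inv {𝕜 E : Type*} [RCLike 𝕜]
    [NormedAddCommGroup E] [InnerProductSpace 𝕜 E] (π : G →* (E ≃ₗᵢ[𝕜] E)) (t g : G)
    (x y : E) : inner 𝕜 x (π (t * g) y) = inner 𝕜 (π t⁻¹ x) (π g y) := by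
  rw [← (π t).inner_map_map (π t⁻¹ x) (π g y)]
  simp [LinearIsometryEquiv.coe_mul]

theorem stmt13_general {G : Type*} [Group G]
    {H : Type*} [NormedAddCommGroup H] [InnerProductSpace ℂ H] [CompleteSpace H]
    (π : G →* (H ≃ₗᵢ[ℂ] H)) (K : Subgroup G) (N : ℕ)
    (hidx : K.index = N) (η : H) (hη : IsParsevalFrameVector π η)
    (hne : ∀ h : K, π (h : G) η ≠ 0)
    (horth : ∀ h h' : K, h ≠ h' → (inner ℂ (π (h : G) η) (π (h' : G) η) : ℂ) = 0)
    (hdense : (Submodule.span ℂ (Set.range fun h : K => π (h : G) η)).topologicalClosure = ⊤) :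
    ‖η‖ ^ 2 = 1 / (N : ℝ) := by
  have hη0 : ‖η‖ ≠ 0 := by simpa using hne 1
  have hsum : HasSum (fun g => ‖⟪η, π g η⟫‖ ^ 2) (‖η‖ ^ 2) := by
    refine (hη η) ▸ (Summable.hasSum ?_)
    by_contra hns
    exact pow_ne_zero 2 hη0 ((hη η).symm.trans (tsum_eq_zero_of_not_summable hns))
  have hcoset (t : G) : HasSum (fun h : K => ‖⟪η, π (t * h) η⟫‖ ^ 2) (‖η‖ ^ 2 * ‖η‖ ^ 2) := by
    have hparseval := hasSum_norm_inner_sq_of_orthogonal hη0 (fun h : K => (π h).norm_map η)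
      (fun _ _ => horth _ _) hdense.ge (π t⁻¹ η)
    rw [(π t⁻¹).norm_map] at hparseval
    simp_rw [inner_map_mul_eq_inner_map_inv, norm_inner_symm (π t⁻¹ η)]
    exact hparseval
  have hcount := K.index_nsmul_eq_of_hasSum_mul hsum hcoset
  rw [hidx, nsmul_eq_mul] at hcount
  exact eq_one_div_of_mul_eq_one_left
    (mul_right_cancel₀ (pow_ne_zero 2 hη0) (by linear_combination hcount))

theorem stmt13 {G : Type*} [Group G] [Countable G]
    {H : Type*} [NormedAddCommGroup H] [InnerProductSpace ℂ H] [CompleteSpace H]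
    (π : G →* (H ≃ₗᵢ[ℂ] H)) (K : Subgroup G) (N : ℕ) (hN : 0 < N)
    (hidx : K.index = N) (η : H) (hη : IsParsevalFrameVector π η)
    (hne : ∀ h : K, π (h : G) η ≠ 0)
    (horth : ∀ h h' : K, h ≠ h' → (inner ℂ (π (h : G) η) (π (h' : G) η) : ℂ) = 0)
    (hdense : (Submodule.span ℂ (Set.range fun h : K => π (h : G) η)).topologicalClosure = ⊤) :
    ‖η‖ ^ 2 = 1 / (N : ℝ) :=
  stmt13_general π K N hidx η hη hne horth hdense
end
end
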